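/- arXiv:2303.01179 — 14 statements merged into one kernel-verified Lean document; each statement's English description precedes it below -/
import Mathlib

section
/- Let d ≥ 2 and let ν : Finset (Fin d) → ℝ be a game. Then for every player i ∈ Fin d, the Shapley value admits the representation I^SV(i) = ν₀(Fin d)/d + Σ_{T ⊆ Fin d, 1 ≤ |T| ≤ d−1} ν₀(T) · μ(|T|) · (𝟙(i ∈ T) − |T|/d), where I^SV(i) := Σ_{T ⊆ (Fin d) \ {i}} ((d − |T| − 1)! · |T|! / d!) · (ν(T ∪ {i}) − ν(T)). -/
lemma coeff_mem (u m : ℕ) :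
    ((Nat.factorial (m+1) : ℝ) * (Nat.factorial u)) / (Nat.factorial (u+m+2)) =
    1 / (((u+m+1 : ℕ) : ℝ) * (Nat.choose (u+m) u : ℝ)) *
      (1 - ((u+1 : ℕ) : ℝ) / ((u+m+2 : ℕ) : ℝ)) := by
  have key : ((u+m).choose u : ℝ) * (Nat.factorial u) * (Nat.factorial m) =
      (Nat.factorial (u+m)) := by
    exact_mod_cast congrArg (Nat.cast : ℕ → ℝ)
      (by simpa using Nat.choose_mul_factorial_mul_factorial (Nat.le_add_right u m))
  have h1 : (Nat.factorial (u+m+1) : ℝ) = (u+m+1) * Nat.factorial (u+m) := by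
    exact_mod_cast congrArg (Nat.cast : ℕ → ℝ) (Nat.factorial_succ (u+m))
  have h2 : (Nat.factorial (u+m+2) : ℝ) = (u+m+2) * Nat.factorial (u+m+1) := by
    exact_mod_cast congrArg (Nat.cast : ℕ → ℝ) (Nat.factorial_succ (u+m+1))
  have h3 : (Nat.factorial (m+1) : ℝ) = (m+1) * Nat.factorial m := by
    exact_mod_cast congrArg (Nat.cast : ℕ → ℝ) (Nat.factorial_succ m)
  have p1 : (0:ℝ) < Nat.factorial (u+m) := by positivity
  have p2 : (0:ℝ) < Nat.factorial u := by positivity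
  have p3 : (0:ℝ) < Nat.factorial m := by positivity
  have p4 : (0:ℝ) < ((u+m).choose u : ℝ) := by
    exact_mod_cast Nat.choose_pos (Nat.le_add_right u m)
  push_cast
  rw [h2, h1, h3]
  field_simp
  linear_combination ((m:ℝ)+1) * key

lemma coeff_notmem (u m : ℕ) :
    (-((Nat.factorial m : ℝ) * (Nat.factorial (u+1)) / (Nat.factorial (u+m+2)))) =
    1 / (((u+m+1 : ℕ) : ℝ) * (Nat.choose (u+m) u : ℝ)) *
      (0 - ((u+1 : ℕ) : ℝ) / ((u+m+2 : ℕ) : ℝ)) := by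
  have key : ((u+m).choose u : ℝ) * (Nat.factorial u) * (Nat.factorial m) =
      (Nat.factorial (u+m)) := by
    exact_mod_cast congrArg (Nat.cast : ℕ → ℝ)
      (by simpa using Nat.choose_mul_factorial_mul_factorial (Nat.le_add_right u m))
  have h1 : (Nat.factorial (u+m+1) : ℝ) = (u+m+1) * Nat.factorial (u+m) := by
    exact_mod_cast congrArg (Nat.cast : ℕ → ℝ) (Nat.factorial_succ (u+m))
  have h2 : (Nat.factorial (u+m+2) : ℝ) = (u+m+2) * Nat.factorial (u+m+1) := by
    exact_mod_cast congrArg (Nat.cast : ℕ → ℝ) (Nat.factorial_succ (u+m+1))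
  have h3 : (Nat.factorial (u+1) : ℝ) = (u+1) * Nat.factorial u := by
    exact_mod_cast congrArg (Nat.cast : ℕ → ℝ) (Nat.factorial_succ u)
  have p1 : (0:ℝ) < Nat.factorial (u+m) := by positivity
  have p2 : (0:ℝ) < Nat.factorial u := by positivity
  have p3 : (0:ℝ) < Nat.factorial m := by positivity
  have p4 : (0:ℝ) < ((u+m).choose u : ℝ) := by
    exact_mod_cast Nat.choose_pos (Nat.le_add_right u m)
  push_cast
  rw [h2, h1, h3]
  field_simp
  linear_combination (-((u:ℝ)+1)) * key


/-- Novel representation of the Shapley value (Theorem 3 of SHAP-IQ):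
`I^SV(i) = ν₀(D)/d + Σ_{T ∈ 𝒯₁} ν₀(T) μ(|T|) (𝟙(i ∈ T) − |T|/d)`. -/
theorem shapley_value_representation
    (d : ℕ) (hd : 2 ≤ d) (ν : Finset (Fin d) → ℝ) (i : Fin d) :
    ∑ T ∈ ((Finset.univ : Finset (Fin d)) \ {i}).powerset,
      ((Nat.factorial (d - T.card - 1) : ℝ) * (Nat.factorial T.card : ℝ) /
        (Nat.factorial d : ℝ)) * (ν (T ∪ {i}) - ν T) =
    (ν Finset.univ - ν ∅) / (d : ℝ) +
      ∑ T ∈ (Finset.univ : Finset (Fin d)).powerset.filter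
          (fun T => 1 ≤ T.card ∧ T.card ≤ d - 1),
        (ν T - ν ∅) *
          (1 / (((d - 1 : ℕ) : ℝ) * (Nat.choose (d - 2) (T.card - 1) : ℝ))) *
          ((if i ∈ T then (1 : ℝ) else 0) - (T.card : ℝ) / (d : ℝ)) := by
  obtain ⟨e, rfl⟩ : ∃ e, d = e + 2 := ⟨d - 2, by omega⟩
  clear hd
  set D : Finset (Fin (e+2)) := Finset.univ with hD
  set g : Finset (Fin (e+2)) → ℝ := fun S => ν S - ν ∅ with hg
  set w : ℕ → ℝ := fun t =>
    (Nat.factorial (e + 2 - t - 1) : ℝ) * (Nat.factorial t) / (Nat.factorial (e+2)) with hw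
  set c : Finset (Fin (e+2)) → ℝ :=
    fun S => if i ∈ S then w (S.card - 1) else - w S.card with hc
  have hP : (D \ {i}).powerset = D.powerset.filter (fun S => i ∉ S) := by
    ext S
    simp [Finset.subset_sdiff, Finset.disjoint_singleton_right, hD]
  -- Step 1: LHS as a single sum over the powerset with coefficients c
  have step1 : ∑ T ∈ (D \ {i}).powerset,
      w T.card * (ν (T ∪ {i}) - ν T) = ∑ S ∈ D.powerset, c S * g S := by
    have expand : ∀ T ∈ (D \ {i}).powerset,
        w T.card * (ν (T ∪ {i}) - ν T) = w T.card * g (T ∪ {i}) - w T.card * g T := by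
      intro T _; simp only [hg]; ring
    rw [Finset.sum_congr rfl expand, Finset.sum_sub_distrib]
    have hA : ∑ T ∈ (D \ {i}).powerset, w T.card * g (T ∪ {i})
        = ∑ S ∈ D.powerset.filter (fun S => i ∈ S), w (S.card - 1) * g S := by
      apply Finset.sum_nbij' (fun T => insert i T) (fun S => S.erase i)
      · intro T hT
        simp only [Finset.mem_powerset, Finset.subset_sdiff,
          Finset.disjoint_singleton_right] at hT
        simp [Finset.mem_filter, Finset.mem_powerset, hD]
      · intro S hS
        simp only [Finset.mem_filter, Finset.mem_powerset] at hS
        simp [Finset.mem_powerset, Finset.subset_sdiff, Finset.disjoint_singleton_right, hD]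
      · intro T hT
        simp only [Finset.mem_powerset, Finset.subset_sdiff,
          Finset.disjoint_singleton_right] at hT
        exact Finset.erase_insert hT.2
      · intro S hS
        simp only [Finset.mem_filter] at hS
        exact Finset.insert_erase hS.2
      · intro T hT
        simp only [Finset.mem_powerset, Finset.subset_sdiff,
          Finset.disjoint_singleton_right] at hT
        rw [Finset.card_insert_of_notMem hT.2, Nat.add_sub_cancel,
          show T ∪ {i} = insert i T from by rw [Finset.union_comm, ← Finset.insert_eq]]
    have hB : ∑ T ∈ (D \ {i}).powerset, w T.card * g T
        = ∑ S ∈ D.powerset.filter (fun S => ¬ i ∈ S), w S.card * g S := by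
      rw [hP]
    rw [hA, hB, ← Finset.sum_filter_add_sum_filter_not D.powerset (fun S => i ∈ S)
      (fun S => c S * g S)]
    have h1 : ∑ x ∈ D.powerset.filter (fun S => i ∈ S), c x * g x
        = ∑ S ∈ D.powerset.filter (fun S => i ∈ S), w (S.card - 1) * g S := by
      apply Finset.sum_congr rfl
      intro S hS
      simp only [Finset.mem_filter] at hS
      simp [hc, hS.2]
    have h2 : ∑ x ∈ D.powerset.filter (fun S => ¬ i ∈ S), c x * g x
        = - ∑ S ∈ D.powerset.filter (fun S => ¬ i ∈ S), w S.card * g S := by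
      rw [← Finset.sum_neg_distrib]
      apply Finset.sum_congr rfl
      intro S hS
      simp only [Finset.mem_filter] at hS
      simp [hc, hS.2]
    rw [h1, h2]
    ring
  -- Step 2: split the powerset sum into the filtered part plus {∅, univ}
  have hcompl : D.powerset.filter (fun S => ¬ (1 ≤ S.card ∧ S.card ≤ e + 2 - 1))
      = {(∅ : Finset (Fin (e+2))), D} := by
    ext S
    have hcard : S.card ≤ e + 2 := le_trans (Finset.card_le_univ S) (by simp)
    simp only [Finset.mem_filter, Finset.mem_powerset, Finset.mem_insert,
      Finset.mem_singleton, hD, Finset.subset_univ, true_and]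
    constructor
    · intro h
      rcases Nat.lt_or_ge S.card 1 with h1 | h1
      · left; rw [← Finset.card_eq_zero]; omega
      · right
        have : S.card = e + 2 := by omega
        exact Finset.eq_univ_of_card S (by rw [Fintype.card_fin]; omega)
    · rintro (rfl | rfl) <;> simp
  have hne : (∅ : Finset (Fin (e+2))) ≠ D := by
    intro h
    have := congrArg Finset.card h
    simp [hD] at this
  have step2 : ∑ S ∈ D.powerset, c S * g S
      = ∑ S ∈ D.powerset.filter (fun S => 1 ≤ S.card ∧ S.card ≤ e + 2 - 1), c S * g S
        + (g D / (e + 2 : ℝ)) := by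
    rw [← Finset.sum_filter_add_sum_filter_not D.powerset
      (fun S => 1 ≤ S.card ∧ S.card ≤ e + 2 - 1) (fun S => c S * g S), hcompl,
      Finset.sum_pair hne]
    have hgempty : g ∅ = 0 := by simp [hg]
    have hcD : c D = 1 / (e + 2 : ℝ) := by
      have hiD : i ∈ D := by simp [hD]
      have hcard : D.card = e + 2 := by simp [hD]
      simp only [hc, if_pos hiD, hcard, hw]
      have hfact : (Nat.factorial (e+2) : ℝ) = (e+2) * Nat.factorial (e+1) := by
        exact_mod_cast congrArg (Nat.cast : ℕ → ℝ) (Nat.factorial_succ (e+1))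
      rw [show e + 2 - (e + 2 - 1) - 1 = 0 from by omega, Nat.factorial_zero, hfact]
      have hp : (0:ℝ) < Nat.factorial (e+1) := by positivity
      push_cast
      field_simp
    rw [hgempty, hcD]
    ring
  -- Step 3: match the coefficients on the filtered part
  have step3 : ∀ S ∈ D.powerset.filter (fun S => 1 ≤ S.card ∧ S.card ≤ e + 2 - 1),
      c S * g S = g S *
        (1 / (((e + 2 - 1 : ℕ) : ℝ) * (Nat.choose (e + 2 - 2) (S.card - 1) : ℝ))) *
        ((if i ∈ S then (1 : ℝ) else 0) - (S.card : ℝ) / ((e+2 : ℕ) : ℝ)) := by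
    intro S hS
    simp only [Finset.mem_filter] at hS
    obtain ⟨hS1, hS2⟩ := hS.2
    obtain ⟨u, hu⟩ : ∃ u, S.card = u + 1 := ⟨S.card - 1, by omega⟩
    obtain ⟨m, hm⟩ : ∃ m, e = u + m := ⟨e - u, by omega⟩
    subst hm
    have he1 : u + m + 2 - 1 = u + m + 1 := by omega
    have he2 : u + m + 2 - 2 = u + m := by omega
    rw [he1, he2, hu, Nat.add_sub_cancel]
    by_cases hiS : i ∈ S
    · simp only [hc, if_pos hiS, hu, Nat.add_sub_cancel, hw]
      have h1 : u + m + 2 - u - 1 = m + 1 := by omega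
      rw [h1]
      have := coeff_mem u m
      push_cast at this ⊢
      rw [this]
      ring
    · simp only [hc, if_neg hiS, hu, hw]
      have h1 : u + m + 2 - (u + 1) - 1 = m := by omega
      rw [h1]
      have := coeff_notmem u m
      push_cast at this ⊢
      rw [this]
      ring
  rw [step1, step2, Finset.sum_congr rfl step3]
  have hgD : g D = ν Finset.univ - ν ∅ := by simp [hg, hD]
  rw [hgD]
  simp only [hg]
  push_cast
  ring
end

section
/- Let d ≥ 2, let t be a natural number with 1 ≤ t ≤ d−1, let T ⊆ Fin d with |T| = t, and let i ∈ Fin d. Writing χ := 𝟙(i ∈ T) ∈ {0,1}, the Shapley-value weight identity holds: (−1)^{1−χ} · (d − t − 1 + χ)! · (t − χ)! / d! = μ(t) · (χ − t/d). -/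
/-- Shapley-value weight identity: for `1 ≤ t ≤ d−1` and `χ = 𝟙(i ∈ T)`,
`(−1)^{1−χ} (d−t−1+χ)! (t−χ)! / d! = μ(t) (χ − t/d)`. -/
theorem shapley_weight_identity
    (d : ℕ) (hd : 2 ≤ d) (t : ℕ) (ht1 : 1 ≤ t) (ht2 : t ≤ d - 1)
    (T : Finset (Fin d)) (hT : T.card = t) (i : Fin d) :
    (-1 : ℝ) ^ (1 - (if i ∈ T then 1 else 0) : ℕ) *
      (Nat.factorial (d - t - 1 + (if i ∈ T then 1 else 0)) : ℝ) *
      (Nat.factorial (t - (if i ∈ T then 1 else 0)) : ℝ) / (Nat.factorial d : ℝ) =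
    (1 / (((d - 1 : ℕ) : ℝ) * (Nat.choose (d - 2) (t - 1) : ℝ))) *
      ((((if i ∈ T then 1 else 0 : ℕ)) : ℝ) - (t : ℝ) / (d : ℝ)) := by
  obtain ⟨a, rfl⟩ : ∃ a, t = a + 1 := ⟨t - 1, (Nat.succ_pred_eq_of_pos ht1).symm⟩
  obtain ⟨b, rfl⟩ : ∃ b, d = a + 1 + b + 1 := ⟨d - 1 - (a + 1), by omega⟩
  have hch : ((a + b).choose a : ℝ) * a.factorial * b.factorial = (a + b).factorial := by
    have := Nat.choose_mul_factorial_mul_factorial (Nat.le_add_right a b)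
    rw [Nat.add_sub_cancel_left] at this
    exact_mod_cast this
  have hchpos : (0 : ℝ) < ((a + b).choose a : ℝ) := by
    exact_mod_cast Nat.choose_pos (Nat.le_add_right a b)
  have hfpos : (0 : ℝ) < ((a + b).factorial : ℝ) := by exact_mod_cast (a + b).factorial_pos
  have hsimp1 : a + 1 + b + 1 - (a + 1) - 1 = b := by omega
  have hsimp2 : a + 1 + b + 1 - 1 = a + b + 1 := by omega
  have hsimp3 : a + 1 + b + 1 - 2 = a + b := by omega
  rw [hsimp1, hsimp2, hsimp3]
  have hfd : ((a + 1 + b + 1).factorial : ℝ)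
      = (a + b + 2) * (a + b + 1) * (a + b).factorial := by
    have : a + 1 + b + 1 = (a + b) + 1 + 1 := by omega
    rw [this]; push_cast [Nat.factorial_succ]; ring
  by_cases hi : i ∈ T
  · simp only [hi, if_true, Nat.add_sub_cancel]
    rw [Nat.factorial_succ b, hfd]
    field_simp
    push_cast
    linear_combination (((b:ℝ)+1)*((a:ℝ)+b+1)*((a:ℝ)+b+2)) * hch
  · simp only [hi, if_false, Nat.sub_zero, Nat.add_zero, Nat.add_sub_cancel]
    rw [Nat.factorial_succ a, hfd]
    field_simp
    push_cast
    linear_combination (-((a:ℝ)+1)*((a:ℝ)+b+1)*((a:ℝ)+b+2)) * hch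
end

section
/- Let d ≥ 2. Then the total Shapley-kernel mass over all proper nonempty subsets equals twice the (d−1)-st harmonic number: Σ_{T ⊆ Fin d, 1 ≤ |T| ≤ d−1} μ(|T|) = 2 · Σ_{k=1}^{d−1} 1/k. Equivalently, Σ_{t=1}^{d−1} C(d,t) · μ(t) = Σ_{t=1}^{d−1} d/(t(d−t)) = 2 h_{d−1}. -/
lemma shapley_key (d t : ℕ) (hd : 2 ≤ d) (h1 : 1 ≤ t) (h2 : t ≤ d - 1) :
    (d.choose t : ℝ) * (1 / (((d - 1 : ℕ) : ℝ) * (Nat.choose (d - 2) (t - 1) : ℝ))) =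
    1 / (t : ℝ) + 1 / ((d - t : ℕ) : ℝ) := by
  have htd : t < d := by omega
  have hnat : d.choose t * (t * (d - t)) = (d - 1) * Nat.choose (d - 2) (t - 1) * d := by
    have e1 : d.choose t * t = d * (d - 1).choose (t - 1) := by
      have h := Nat.add_one_mul_choose_eq (d - 1) (t - 1)
      have hd1 : d - 1 + 1 = d := by omega
      have ht1 : t - 1 + 1 = t := by omega
      rw [hd1, ht1] at h
      omega
    have e2 : (d - 1).choose (t - 1) * (d - t) = (d - 2).choose (t - 1) * (d - 1) := by
      have h := Nat.choose_mul_succ_eq (d - 2) (t - 1)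
      have hd2 : d - 2 + 1 = d - 1 := by omega
      have h3 : d - 1 - (t - 1) = d - t := by omega
      rw [hd2, h3] at h
      omega
    calc d.choose t * (t * (d - t)) = d.choose t * t * (d - t) := by ring
      _ = d * ((d - 1).choose (t - 1) * (d - t)) := by rw [e1]; ring
      _ = d * ((d - 2).choose (t - 1) * (d - 1)) := by rw [e2]
      _ = (d - 1) * Nat.choose (d - 2) (t - 1) * d := by ring
  have hc : 0 < (d - 2).choose (t - 1) := Nat.choose_pos (by omega)
  have hR : (d.choose t : ℝ) * ((t : ℝ) * ((d - t : ℕ) : ℝ)) =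
      ((d - 1 : ℕ) : ℝ) * ((d - 2).choose (t - 1) : ℝ) * (d : ℝ) := by exact_mod_cast hnat
  have ht0 : (t : ℝ) ≠ 0 := by positivity
  have hdt0 : ((d - t : ℕ) : ℝ) ≠ 0 := by
    have : 0 < d - t := by omega
    positivity
  have hd10 : ((d - 1 : ℕ) : ℝ) ≠ 0 := by
    have : 0 < d - 1 := by omega
    positivity
  have hc0 : ((d - 2).choose (t - 1) : ℝ) ≠ 0 := by positivity
  have hsum : ((t : ℝ) + ((d - t : ℕ) : ℝ)) = (d : ℝ) := by
    have : t + (d - t) = d := by omega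
    exact_mod_cast this
  have hrhs : 1 / (t : ℝ) + 1 / ((d - t : ℕ) : ℝ) = (d : ℝ) / ((t : ℝ) * ((d - t : ℕ) : ℝ)) := by
    rw [div_add_div _ _ ht0 hdt0]
    rw [show (1 * ((d - t : ℕ) : ℝ) + (t : ℝ) * 1) = (t : ℝ) + ((d - t : ℕ) : ℝ) by ring, hsum]
  rw [hrhs, mul_one_div, div_eq_div_iff (by exact mul_ne_zero hd10 hc0)
    (by exact mul_ne_zero ht0 hdt0)]
  linear_combination hR

/-- Total Shapley-kernel mass over all proper nonempty subsets equals twice the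
`(d−1)`-st harmonic number: `Σ_{T ∈ 𝒯₁} μ(|T|) = 2 h_{d−1}`. -/
theorem shapley_kernel_total_mass
    (d : ℕ) (hd : 2 ≤ d) :
    ∑ T ∈ (Finset.univ : Finset (Fin d)).powerset.filter
        (fun T => 1 ≤ T.card ∧ T.card ≤ d - 1),
      1 / (((d - 1 : ℕ) : ℝ) * (Nat.choose (d - 2) (T.card - 1) : ℝ)) =
    2 * ∑ k ∈ Finset.Icc 1 (d - 1), (1 : ℝ) / (k : ℝ) := by
  have hset : (Finset.univ : Finset (Fin d)).powerset.filter
        (fun T => 1 ≤ T.card ∧ T.card ≤ d - 1)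
      = (Finset.Icc 1 (d - 1)).biUnion (fun t => Finset.powersetCard t Finset.univ) := by
    ext T
    simp [Finset.mem_powersetCard, Finset.mem_Icc, eq_comm, and_comm]
  rw [hset, Finset.sum_biUnion]
  · have hinner : ∀ t ∈ Finset.Icc 1 (d - 1),
        ∑ T ∈ Finset.powersetCard t (Finset.univ : Finset (Fin d)),
          1 / (((d - 1 : ℕ) : ℝ) * (Nat.choose (d - 2) (T.card - 1) : ℝ)) =
        1 / (t : ℝ) + 1 / ((d - t : ℕ) : ℝ) := by
      intro t ht
      rw [Finset.mem_Icc] at ht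
      have : ∀ T ∈ Finset.powersetCard t (Finset.univ : Finset (Fin d)),
          1 / (((d - 1 : ℕ) : ℝ) * (Nat.choose (d - 2) (T.card - 1) : ℝ)) =
          1 / (((d - 1 : ℕ) : ℝ) * (Nat.choose (d - 2) (t - 1) : ℝ)) := by
        intro T hT
        rw [Finset.mem_powersetCard] at hT
        rw [hT.2]
      rw [Finset.sum_congr rfl this, Finset.sum_const, Finset.card_powersetCard,
        Finset.card_univ, Fintype.card_fin, nsmul_eq_mul]
      exact shapley_key d t hd ht.1 ht.2
    rw [Finset.sum_congr rfl hinner, Finset.sum_add_distrib, two_mul]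
    congr 1
    · refine Finset.sum_nbij' (fun t => d - t) (fun t => d - t) ?_ ?_ ?_ ?_ ?_ <;>
        intro t ht <;> simp only [Finset.mem_Icc] at * <;> omega
  · intro x hx y hy hxy
    apply Finset.disjoint_left.mpr
    intro T hTx hTy
    rw [Finset.mem_powersetCard] at hTx hTy
    exact hxy (hTx.2.symm.trans hTy.2)
end

section
/- Let d ≥ 2 and fix i ∈ Fin d. Then the Shapley-kernel mass of the proper nonempty subsets containing i equals the (d−1)-st harmonic number: Σ_{T ⊆ Fin d, 1 ≤ |T| ≤ d−1, i ∈ T} μ(|T|) = Σ_{k=1}^{d−1} 1/k. Equivalently, Σ_{t=1}^{d−1} C(d−1, t−1) · μ(t) = h_{d−1}; hence under the normalized distribution p(T) := μ(|T|)/(2 h_{d−1}) each coordinate has marginal probability 1/2. -/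
/-- The Shapley-kernel mass of the proper nonempty subsets containing a fixed player `i`
equals the `(d−1)`-st harmonic number: `Σ_{T ∈ 𝒯₁, i ∈ T} μ(|T|) = h_{d−1}`. -/
theorem shapley_kernel_marginal_mass
    (d : ℕ) (hd : 2 ≤ d) (i : Fin d) :
    ∑ T ∈ (Finset.univ : Finset (Fin d)).powerset.filter
        (fun T => (1 ≤ T.card ∧ T.card ≤ d - 1) ∧ i ∈ T),
      1 / (((d - 1 : ℕ) : ℝ) * (Nat.choose (d - 2) (T.card - 1) : ℝ)) =
    ∑ k ∈ Finset.Icc 1 (d - 1), (1 : ℝ) / (k : ℝ) := by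
  obtain ⟨e, rfl⟩ : ∃ e, d = e + 2 := ⟨d - 2, by omega⟩
  have h1 : e + 2 - 1 = e + 1 := rfl
  have h2 : e + 2 - 2 = e := rfl
  rw [h1, h2]
  -- Step A: biject with subsets of univ.erase i of card ≤ e
  have hA : ∑ T ∈ (Finset.univ : Finset (Fin (e+2))).powerset.filter
        (fun T => (1 ≤ T.card ∧ T.card ≤ e + 1) ∧ i ∈ T),
      1 / (((e + 1 : ℕ) : ℝ) * (Nat.choose e (T.card - 1) : ℝ))
      = ∑ A ∈ ((Finset.univ : Finset (Fin (e+2))).erase i).powerset.filter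
          (fun A => A.card ≤ e),
        1 / (((e + 1 : ℕ) : ℝ) * (Nat.choose e A.card : ℝ)) := by
    refine Finset.sum_nbij' (fun T => T.erase i) (fun A => insert i A) ?_ ?_ ?_ ?_ ?_
    · intro T hT
      simp only [Finset.mem_filter, Finset.mem_powerset] at hT ⊢
      obtain ⟨_, ⟨h1c, h2c⟩, hi⟩ := hT
      constructor
      · intro x hx
        simp only [Finset.mem_erase] at hx ⊢
        exact ⟨hx.1, Finset.mem_univ x⟩
      · rw [Finset.card_erase_of_mem hi]; omega
    · intro A hA
      simp only [Finset.mem_filter, Finset.mem_powerset] at hA ⊢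
      obtain ⟨hsub, hcard⟩ := hA
      have hiA : i ∉ A := fun h => (Finset.mem_erase.mp (hsub h)).1 rfl
      refine ⟨fun x _ => Finset.mem_univ x, ⟨?_, ?_⟩, Finset.mem_insert_self i A⟩
      · rw [Finset.card_insert_of_notMem hiA]; omega
      · rw [Finset.card_insert_of_notMem hiA]; omega
    · intro T hT
      simp only [Finset.mem_filter] at hT
      exact Finset.insert_erase hT.2.2
    · intro A hA
      simp only [Finset.mem_filter, Finset.mem_powerset] at hA
      have hiA : i ∉ A := fun h => (Finset.mem_erase.mp (hA.1 h)).1 rfl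
      exact Finset.erase_insert hiA
    · intro T hT
      simp only [Finset.mem_filter] at hT
      rw [Finset.card_erase_of_mem hT.2.2]
  rw [hA]
  -- Step B: group by cardinality
  have hmaps : ∀ A ∈ ((Finset.univ : Finset (Fin (e+2))).erase i).powerset.filter
      (fun A => A.card ≤ e), A.card ∈ Finset.range (e + 1) := by
    intro A hA
    simp only [Finset.mem_filter] at hA
    simp [Nat.lt_succ_iff, hA.2]
  rw [← Finset.sum_fiberwise_of_maps_to hmaps]
  -- Fibers are powersetCard
  have hfiber : ∀ t ∈ Finset.range (e + 1),
      (((Finset.univ : Finset (Fin (e+2))).erase i).powerset.filter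
        (fun A => A.card ≤ e)).filter (fun A => A.card = t)
      = ((Finset.univ : Finset (Fin (e+2))).erase i).powersetCard t := by
    intro t ht
    simp only [Finset.mem_range, Nat.lt_succ_iff] at ht
    ext A
    simp only [Finset.mem_filter, Finset.mem_powerset, Finset.mem_powersetCard]
    constructor
    · rintro ⟨⟨h1, h2⟩, h3⟩; exact ⟨h1, h3⟩
    · rintro ⟨h1, h3⟩; exact ⟨⟨h1, h3 ▸ ht⟩, h3⟩
  have hcard_erase : ((Finset.univ : Finset (Fin (e+2))).erase i).card = e + 1 := by
    rw [Finset.card_erase_of_mem (Finset.mem_univ i), Finset.card_univ, Fintype.card_fin]; omega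
  calc ∑ t ∈ Finset.range (e + 1),
        ∑ A ∈ (((Finset.univ : Finset (Fin (e+2))).erase i).powerset.filter
          (fun A => A.card ≤ e)).filter (fun A => A.card = t),
        1 / (((e + 1 : ℕ) : ℝ) * (Nat.choose e A.card : ℝ))
      = ∑ t ∈ Finset.range (e + 1), (1 : ℝ) / ((e + 1 - t : ℕ) : ℝ) := by
        refine Finset.sum_congr rfl fun t ht => ?_
        rw [hfiber t ht]
        rw [Finset.sum_congr rfl (fun A hA => by
          rw [(Finset.mem_powersetCard.mp hA).2])]
        rw [Finset.sum_const, Finset.card_powersetCard, hcard_erase, nsmul_eq_mul]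
        simp only [Finset.mem_range, Nat.lt_succ_iff] at ht
        have hch : (Nat.choose e t : ℝ) ≠ 0 := Nat.cast_ne_zero.mpr (Nat.choose_pos ht).ne'
        have hsub : (0:ℝ) < ((e + 1 - t : ℕ) : ℝ) := by
          have : 0 < e + 1 - t := by omega
          exact_mod_cast this
        have key : (Nat.choose e t : ℝ) * ((e:ℝ) + 1) = (Nat.choose (e+1) t : ℝ) * ((e + 1 - t : ℕ) : ℝ) := by
          exact_mod_cast congrArg (Nat.cast (R := ℝ)) (Nat.choose_mul_succ_eq e t)
        have hE : ((e:ℝ) + 1) ≠ 0 := by positivity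
        field_simp
        rw [Nat.cast_add_one]
        nlinarith [key]
      _ = ∑ k ∈ Finset.Icc 1 (e + 1), (1 : ℝ) / (k : ℝ) := by
        have hrhs : ∑ k ∈ Finset.Icc 1 (e + 1), (1 : ℝ) / (k : ℝ)
            = ∑ j ∈ Finset.range (e + 1), (1 : ℝ) / ((j + 1 : ℕ) : ℝ) := by
          rw [show Finset.Icc 1 (e+1) = Finset.Ico 1 (e+2) from rfl,
            Finset.sum_Ico_eq_sum_range]
          refine Finset.sum_congr (by norm_num) fun j _ => ?_
          rw [add_comm 1 j]
        rw [hrhs, ← Finset.sum_range_reflect (fun j => (1:ℝ)/((j+1 : ℕ):ℝ)) (e+1)]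
        refine Finset.sum_congr rfl fun t ht => ?_
        simp only [Finset.mem_range, Nat.lt_succ_iff] at ht
        have h : e + 1 - t = e + 1 - 1 - t + 1 := by omega
        rw [h]
end

section
/- Let d ≥ 2 and let ν : Finset (Fin d) → ℝ be a game. Let h := Σ_{k=1}^{d−1} 1/k, and define the probability weights p(T) := μ(|T|)/(2h) on 𝒯₁ := {T ⊆ Fin d : 1 ≤ |T| ≤ d−1}. Let A be the d × d real matrix with entries A_{ij} := Σ_{T ∈ 𝒯₁, i ∈ T, j ∈ T} p(T). Given K ≥ 1 and arbitrary samples T₁, …, T_K ∈ 𝒯₁ with binary indicator vectors Z_k ∈ ℝ^d (where (Z_k)_i = 1 if i ∈ T_k and 0 otherwise), set b̂ := (1/K) Σ_{k=1}^K ν₀(T_k) · Z_k. Then the Unbiased KernelSHAP estimator equals the SHAP-IQ weighted sum: for every i ∈ Fin d, (A⁻¹ ·ᵥ (b̂ − ((𝟏 ⬝ (A⁻¹ ·ᵥ b̂) − ν₀(Fin d)) / (𝟏 ⬝ (A⁻¹ ·ᵥ 𝟏))) · 𝟏))_i = ν₀(Fin d)/d + (2h/K) · Σ_{k=1}^K ν₀(T_k)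 · (𝟙(i ∈ T_k) − |T_k|/d). -/
open Finset

lemma count_mem_aux {α : Type*} [DecidableEq α] (s : Finset α) (i : α) (hi : i ∈ s) (t : ℕ) :
    #((Finset.powersetCard (t+1) s).filter (fun U => i ∈ U))
      = Nat.choose (#s - 1) t := by
  rw [show #s - 1 = #(s.erase i) from (Finset.card_erase_of_mem hi).symm, ← Finset.card_powersetCard t (s.erase i)]
  apply Finset.card_nbij' (fun U => U.erase i) (fun V => insert i V)
  · intro U hU
    simp only [mem_coe, mem_filter, mem_powersetCard] at hU
    obtain ⟨⟨hsub, hcard⟩, hiU⟩ := hU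
    simp only [mem_coe, mem_powersetCard]
    constructor
    · exact fun x hx => mem_erase.2 ⟨(mem_erase.1 hx).1, hsub (mem_erase.1 hx).2⟩
    · rw [card_erase_of_mem hiU, hcard]; omega
  · intro V hV
    simp only [mem_coe, mem_powersetCard] at hV
    obtain ⟨hsub, hcard⟩ := hV
    have hiV : i ∉ V := fun hx => (mem_erase.1 (hsub hx)).1 rfl
    simp only [mem_coe, mem_filter, mem_powersetCard]
    refine ⟨⟨?_, ?_⟩, mem_insert_self _ _⟩
    · intro x hx
      rcases mem_insert.1 hx with rfl | hx
      · exact hi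
      · exact (erase_subset _ _) (hsub hx)
    · rw [card_insert_of_notMem hiV, hcard]
  · intro U hU
    simp only [mem_coe, mem_filter] at hU
    exact insert_erase hU.2
  · intro V hV
    simp only [mem_coe, mem_powersetCard] at hV
    have hiV : i ∉ V := fun hx => (mem_erase.1 (hV.1 hx)).1 rfl
    exact erase_insert hiV

open Finset

lemma sum_decomp {α : Type*} [DecidableEq α] [Fintype α] (m : ℕ)
    (P : Finset α → Prop) [DecidablePred P] (g : Finset α → ℝ) :
    ∑ U ∈ (Finset.univ : Finset α).powerset.filter
        (fun U => (1 ≤ U.card ∧ U.card ≤ m) ∧ P U), g U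
      = ∑ t ∈ Finset.Icc 1 m, ∑ U ∈ (Finset.powersetCard t Finset.univ).filter P, g U := by
  rw [← Finset.sum_biUnion]
  · congr 1
    ext U
    simp only [Finset.mem_biUnion, Finset.mem_Icc, Finset.mem_filter, Finset.mem_powerset,
      Finset.mem_powersetCard]
    constructor
    · rintro ⟨hsub, ⟨h1, h2⟩, hP⟩
      exact ⟨U.card, ⟨h1, h2⟩, ⟨hsub, rfl⟩, hP⟩
    · rintro ⟨t, ⟨h1, h2⟩, ⟨hsub, hc⟩, hP⟩
      subst hc
      exact ⟨hsub, ⟨h1, h2⟩, hP⟩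
  · intro x hx y hy hxy
    simp only [Function.onFun]
    apply Finset.disjoint_left.2
    intro U hU hU'
    simp only [Finset.mem_filter, Finset.mem_powersetCard] at hU hU'
    exact hxy (hU.1.2.symm.trans hU'.1.2)

set_option maxHeartbeats 1600000 in

/-- SHAP-IQ simplifies Unbiased KernelSHAP (Theorem 4 of SHAP-IQ): the U-KSH estimator
computed from arbitrary samples `T₁,…,T_K ∈ 𝒯₁` equals the SHAP-IQ weighted sum. -/
theorem unbiased_kernelshap_eq_shapiq
    (d : ℕ) (hd : 2 ≤ d) (ν : Finset (Fin d) → ℝ) (K : ℕ) (hK : 1 ≤ K)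
    (T : Fin K → Finset (Fin d))
    (hT : ∀ k, 1 ≤ (T k).card ∧ (T k).card ≤ d - 1) (i : Fin d) :
    let ν₀ : Finset (Fin d) → ℝ := fun U => ν U - ν ∅
    let μ : ℕ → ℝ := fun t => 1 / (((d - 1 : ℕ) : ℝ) * (Nat.choose (d - 2) (t - 1) : ℝ))
    let h : ℝ := ∑ k ∈ Finset.Icc 1 (d - 1), (1 : ℝ) / (k : ℝ)
    let p : Finset (Fin d) → ℝ := fun U => μ U.card / (2 * h)
    let A : Matrix (Fin d) (Fin d) ℝ := Matrix.of fun i j =>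
      ∑ U ∈ (Finset.univ : Finset (Fin d)).powerset.filter
          (fun U => (1 ≤ U.card ∧ U.card ≤ d - 1) ∧ i ∈ U ∧ j ∈ U), p U
    let Z : Fin K → (Fin d → ℝ) := fun k j => if j ∈ T k then 1 else 0
    let bhat : Fin d → ℝ := (1 / (K : ℝ)) • ∑ k, ν₀ (T k) • Z k
    let one : Fin d → ℝ := fun _ => 1
    (A⁻¹.mulVec (bhat -
        ((dotProduct one (A⁻¹.mulVec bhat) - ν₀ Finset.univ) /
          (dotProduct one (A⁻¹.mulVec one))) • one)) i =
      ν₀ Finset.univ / (d : ℝ) + (2 * h / (K : ℝ)) *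
        ∑ k, ν₀ (T k) * ((if i ∈ T k then (1 : ℝ) else 0) - ((T k).card : ℝ) / (d : ℝ)) := by
  intro ν₀ μ h p A Z bhat one
  -- basic positivity facts
  have hd1 : (1 : ℕ) ≤ d - 1 := by omega
  have hh : 0 < h := by
    apply Finset.sum_pos
    · intro k hk
      simp only [Finset.mem_Icc] at hk
      have : (0:ℝ) < (k:ℝ) := by exact_mod_cast Nat.lt_of_lt_of_le Nat.zero_lt_one hk.1
      positivity
    · exact Finset.nonempty_Icc.2 hd1
  have hh0 : h ≠ 0 := ne_of_gt hh
  have hd0 : ((d:ℕ):ℝ) ≠ 0 := by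
    have : (0:ℝ) < (d:ℝ) := by exact_mod_cast Nat.lt_of_lt_of_le Nat.zero_lt_two hd
    exact ne_of_gt this
  have hdm1 : (0:ℝ) < ((d-1 : ℕ):ℝ) := by exact_mod_cast Nat.lt_of_lt_of_le Nat.zero_lt_one hd1
  have hdm1' : (0:ℝ) < (d:ℝ) - 1 := by
    have h2 : (2:ℝ) ≤ (d:ℝ) := by exact_mod_cast hd
    linarith
  have hdm1'' : (d:ℝ) - 1 ≠ 0 := ne_of_gt hdm1'
  have hK0 : ((K:ℕ):ℝ) ≠ 0 := by
    have : (0:ℝ) < (K:ℝ) := by exact_mod_cast Nat.lt_of_lt_of_le Nat.zero_lt_one hK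
    exact ne_of_gt this
  have hp0 : ∀ U : Finset (Fin d), 0 ≤ p U := by
    intro U
    apply div_nonneg
    · apply one_div_nonneg.2
      positivity
    · positivity
  -- inner sums over powersetCard of p are constant * count
  have hpc : ∀ t : ℕ, ∀ Q : Finset (Fin d) → Prop, ∀ _ : DecidablePred Q,
      ∑ U ∈ (Finset.powersetCard t Finset.univ).filter Q, p U
        = (((Finset.powersetCard t (Finset.univ : Finset (Fin d))).filter Q).card : ℝ)
            * (μ t / (2*h)) := by
    intro t Q _
    rw [Finset.sum_congr rfl (fun U hU => ?_), Finset.sum_const, nsmul_eq_mul]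
    simp only [Finset.mem_filter, Finset.mem_powersetCard] at hU
    show μ U.card / (2*h) = μ t / (2*h)
    rw [hU.1.2]
  -- the constant diagonal value
  set c : ℝ := ∑ t ∈ Finset.Icc 1 (d-1),
      ((Nat.choose (d-1) (t-1) : ℕ) : ℝ) * (μ t / (2*h)) with hc
  have hdiag : ∀ i₀ : Fin d, A i₀ i₀ = c := by
    intro i₀
    show ∑ U ∈ (Finset.univ : Finset (Fin d)).powerset.filter
        (fun U => (1 ≤ U.card ∧ U.card ≤ d - 1) ∧ i₀ ∈ U ∧ i₀ ∈ U), p U = c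
    rw [sum_decomp, hc]
    apply Finset.sum_congr rfl
    intro t ht
    simp only [Finset.mem_Icc] at ht
    rw [hpc t _ _]
    congr 1
    have hfe : (Finset.powersetCard t (Finset.univ : Finset (Fin d))).filter
        (fun U => i₀ ∈ U ∧ i₀ ∈ U)
        = (Finset.powersetCard t (Finset.univ : Finset (Fin d))).filter (fun U => i₀ ∈ U) := by
      apply Finset.filter_congr
      intro U _
      simp
    rw [hfe]
    have ht' : t - 1 + 1 = t := by omega
    rw [← ht', count_mem_aux Finset.univ i₀ (Finset.mem_univ i₀) (t-1)]
    simp [Finset.card_univ]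
  -- off-diagonal entries
  have hoff : ∀ i₀ j₀ : Fin d, i₀ ≠ j₀ → A i₀ j₀ = c - 1/(2*h) := by
    intro i₀ j₀ hne
    have key : A i₀ i₀ - A i₀ j₀ = 1/(2*h) := by
      have e1 : A i₀ i₀ = ∑ t ∈ Finset.Icc 1 (d-1),
          ∑ U ∈ (Finset.powersetCard t Finset.univ).filter (fun U => i₀ ∈ U ∧ i₀ ∈ U), p U :=
        sum_decomp (d-1) _ p
      have e2 : A i₀ j₀ = ∑ t ∈ Finset.Icc 1 (d-1),
          ∑ U ∈ (Finset.powersetCard t Finset.univ).filter (fun U => i₀ ∈ U ∧ j₀ ∈ U), p U :=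
        sum_decomp (d-1) _ p
      rw [e1, e2, ← Finset.sum_sub_distrib]
      have term : ∀ t ∈ Finset.Icc 1 (d-1),
          (∑ U ∈ (Finset.powersetCard t Finset.univ).filter (fun U => i₀ ∈ U ∧ i₀ ∈ U), p U)
          - (∑ U ∈ (Finset.powersetCard t Finset.univ).filter (fun U => i₀ ∈ U ∧ j₀ ∈ U), p U)
          = 1 / (((d-1:ℕ):ℝ) * (2*h)) := by
        intro t ht
        simp only [Finset.mem_Icc] at ht
        rw [hpc t _ _, hpc t _ _]
        -- card split
        have hsplit : ((Finset.powersetCard t (Finset.univ : Finset (Fin d))).filter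
              (fun U => i₀ ∈ U ∧ i₀ ∈ U)).card
            = ((Finset.powersetCard t (Finset.univ : Finset (Fin d))).filter
              (fun U => i₀ ∈ U ∧ j₀ ∈ U)).card
            + ((Finset.powersetCard t (Finset.univ : Finset (Fin d))).filter
              (fun U => i₀ ∈ U ∧ j₀ ∉ U)).card := by
          have h1 : (Finset.powersetCard t (Finset.univ : Finset (Fin d))).filter
                (fun U => i₀ ∈ U ∧ i₀ ∈ U)
              = (Finset.powersetCard t (Finset.univ : Finset (Fin d))).filter
                (fun U => i₀ ∈ U) := by
            apply Finset.filter_congr; intro U _; simp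
          rw [h1, ← Finset.filter_filter, ← Finset.filter_filter]
          exact (Finset.card_filter_add_card_filter_not _).symm
        have hcount : ((Finset.powersetCard t (Finset.univ : Finset (Fin d))).filter
              (fun U => i₀ ∈ U ∧ j₀ ∉ U)).card = Nat.choose (d-2) (t-1) := by
          have hfe2 : (Finset.powersetCard t (Finset.univ : Finset (Fin d))).filter
                (fun U => i₀ ∈ U ∧ j₀ ∉ U)
              = (Finset.powersetCard t (Finset.univ.erase j₀)).filter (fun U => i₀ ∈ U) := by
            ext U
            simp only [Finset.mem_filter, Finset.mem_powersetCard, Finset.subset_erase,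
              Finset.subset_univ, true_and]
            tauto
          rw [hfe2]
          have ht' : t - 1 + 1 = t := by omega
          rw [← ht', count_mem_aux (Finset.univ.erase j₀) i₀
            (Finset.mem_erase.2 ⟨hne, Finset.mem_univ _⟩) (t-1)]
          rw [Finset.card_erase_of_mem (Finset.mem_univ _), Finset.card_univ, Fintype.card_fin]
          congr 1 <;> omega
        rw [hsplit, hcount]
        have hμt : μ t = 1 / (((d - 1 : ℕ) : ℝ) * ((Nat.choose (d - 2) (t - 1) : ℕ) : ℝ)) := rfl
        have hC0 : ((Nat.choose (d-2) (t-1) : ℕ) : ℝ) ≠ 0 := by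
          have : 0 < Nat.choose (d-2) (t-1) := Nat.choose_pos (by omega)
          exact_mod_cast ne_of_gt this
        rw [hμt]
        push_cast
        field_simp
        ring
      rw [Finset.sum_congr rfl term, Finset.sum_const, nsmul_eq_mul, Nat.card_Icc]
      have : ((d - 1 + 1 - 1 : ℕ) : ℝ) = ((d-1:ℕ):ℝ) := by norm_num
      rw [this]
      push_cast
      field_simp
    rw [hdiag i₀] at key
    linarith
  -- entrywise description of A
  set μ₂ : ℝ := c - 1/(2*h) with hμ₂def
  have hA : ∀ i₀ j₀ : Fin d, A i₀ j₀ = μ₂ + (if i₀ = j₀ then 1/(2*h) else 0) := by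
    intro i₀ j₀
    by_cases he : i₀ = j₀
    · subst he; rw [hdiag]; simp [hμ₂def]
    · rw [hoff _ _ he]; simp [he, hμ₂def]
  have hμ₂ : 0 ≤ μ₂ := by
    obtain ⟨j₁, hj₁⟩ := Fintype.exists_ne_of_one_lt_card (by simp; omega) i
    have h2 := hoff j₁ i hj₁
    have h3 : A j₁ i = ∑ U ∈ (Finset.univ : Finset (Fin d)).powerset.filter
        (fun U => (1 ≤ U.card ∧ U.card ≤ d - 1) ∧ j₁ ∈ U ∧ i ∈ U), p U := rfl
    rw [← h2, h3]
    exact Finset.sum_nonneg (fun U _ => hp0 U)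
  set D : ℝ := 1 + 2*h*(d:ℝ)*μ₂ with hDdef
  have hD : 0 < D := by
    have h1 : 0 ≤ 2*h*(d:ℝ)*μ₂ := by positivity
    rw [hDdef]; linarith
  have hD0 : D ≠ 0 := ne_of_gt hD
  set β : ℝ := μ₂ * (2*h)^2 / D with hβdef
  set B : Matrix (Fin d) (Fin d) ℝ :=
    Matrix.of (fun i₀ j₀ => (if i₀ = j₀ then 2*h else 0) - β) with hBdef
  have hAB : A * B = 1 := by
    ext i₀ j₀
    rw [Matrix.mul_apply]
    have expand : ∀ k : Fin d, A i₀ k * B k j₀ =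
        μ₂ * (if k = j₀ then 2*h else 0)
        + (if i₀ = k then (if k = j₀ then ((1/(2*h))*(2*h)) else 0) else 0)
        - μ₂ * β
        - (if i₀ = k then (1/(2*h))*β else 0) := by
      intro k
      rw [hA i₀ k]
      show (μ₂ + (if i₀ = k then 1/(2*h) else 0)) * ((if k = j₀ then 2*h else 0) - β) = _
      by_cases h2 : k = j₀
      · subst h2
        by_cases h1 : i₀ = k <;> simp [h1] <;> ring
      · by_cases h1 : i₀ = k
        · subst h1
          simp [h2] <;> ring
        · simp [h1, h2]
    rw [Finset.sum_congr rfl (fun k _ => expand k)]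
    rw [Finset.sum_sub_distrib, Finset.sum_sub_distrib, Finset.sum_add_distrib]
    rw [← Finset.mul_sum, Finset.sum_ite_eq', Finset.sum_ite_eq, Finset.sum_ite_eq,
      Finset.sum_const, Finset.card_univ, Fintype.card_fin, nsmul_eq_mul]
    simp only [Finset.mem_univ, if_true]
    rw [Matrix.one_apply]
    by_cases he : i₀ = j₀
    · simp only [he, if_true]
      rw [hβdef, hDdef]
      field_simp
      ring
    · simp only [he, if_false]
      rw [hβdef, hDdef]
      field_simp
      ring
  have hAinv : A⁻¹ = B := Matrix.inv_eq_right_inv hAB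
  rw [hAinv]
  -- mulVec formula
  have hmv : ∀ (v : Fin d → ℝ) (i₀ : Fin d),
      B.mulVec v i₀ = (2*h) * v i₀ - β * ∑ j, v j := by
    intro v i₀
    show ∑ j, ((if i₀ = j then 2*h else 0) - β) * v j = _
    rw [Finset.sum_congr rfl (fun j _ => by rw [sub_mul, ite_mul, zero_mul]),
      Finset.sum_sub_distrib, Finset.sum_ite_eq, ← Finset.mul_sum]
    simp only [Finset.mem_univ, if_true]
  have hq' : 2*h - β*(d:ℝ) = 2*h/D := by
    rw [hβdef, hDdef]
    field_simp
    ring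
  have hq : 2*h - β*(d:ℝ) ≠ 0 := by
    rw [hq']
    positivity
  have hone : ∀ j : Fin d, one j = 1 := fun _ => rfl
  have hsumone : ∑ j : Fin d, one j = (d:ℝ) := by
    rw [Finset.sum_congr rfl (fun j _ => hone j), Finset.sum_const, Finset.card_univ,
      Fintype.card_fin, nsmul_eq_mul, mul_one]
  have e1 : dotProduct one (B.mulVec bhat)
      = (2*h - β*(d:ℝ)) * ∑ j, bhat j := by
    show ∑ j, one j * B.mulVec bhat j = _
    have step : ∀ j : Fin d, one j * B.mulVec bhat j
        = 2*h * bhat j - β * ∑ j', bhat j' := by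
      intro j
      rw [hmv bhat j, hone j, one_mul]
    rw [Finset.sum_congr rfl (fun j _ => step j), Finset.sum_sub_distrib, ← Finset.mul_sum,
      Finset.sum_const, Finset.card_univ, Fintype.card_fin, nsmul_eq_mul]
    ring
  have e2 : dotProduct one (B.mulVec one)
      = (d:ℝ) * (2*h - β*(d:ℝ)) := by
    show ∑ j, one j * B.mulVec one j = _
    have step : ∀ j : Fin d, one j * B.mulVec one j = 2*h - β*(d:ℝ) := by
      intro j
      rw [hmv one j, hone j, hsumone, one_mul, mul_one]
    rw [Finset.sum_congr rfl (fun j _ => step j), Finset.sum_const, Finset.card_univ,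
      Fintype.card_fin, nsmul_eq_mul]
  rw [e1, e2, hmv]
  -- bhat values
  have hb : ∀ i₀ : Fin d, bhat i₀
      = (1/(K:ℝ)) * ∑ k, ν₀ (T k) * (if i₀ ∈ T k then 1 else 0) := by
    intro i₀
    show (1/(K:ℝ)) * (∑ k, ν₀ (T k) • Z k) i₀ = _
    rw [Finset.sum_apply]
    congr 1
  have hS : ∑ j, bhat j = (1/(K:ℝ)) * ∑ k, ν₀ (T k) * ((T k).card : ℝ) := by
    rw [Finset.sum_congr rfl (fun j _ => hb j), ← Finset.mul_sum]
    congr 1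
    rw [Finset.sum_comm]
    apply Finset.sum_congr rfl
    intro k _
    rw [← Finset.mul_sum]
    congr 1
    rw [Finset.sum_ite_mem, Finset.univ_inter, Finset.sum_const, nsmul_eq_mul, mul_one]
  have hsplit2 : ∑ k, ν₀ (T k) * ((if i ∈ T k then (1:ℝ) else 0) - ((T k).card : ℝ)/(d:ℝ))
      = (∑ k, ν₀ (T k) * (if i ∈ T k then (1:ℝ) else 0))
        - (1/(d:ℝ)) * ∑ k, ν₀ (T k) * ((T k).card : ℝ) := by
    rw [Finset.mul_sum, ← Finset.sum_sub_distrib]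
    exact Finset.sum_congr rfl (fun k _ => by ring)
  -- final scalar computation
  have hsub : ∀ j : Fin d, (bhat - (((2*h - β*(d:ℝ)) * ∑ j, bhat j - ν₀ Finset.univ) /
        ((d:ℝ) * (2*h - β*(d:ℝ)))) • one) j
      = bhat j - ((2*h - β*(d:ℝ)) * (∑ j, bhat j) - ν₀ Finset.univ) /
        ((d:ℝ) * (2*h - β*(d:ℝ))) := by
    intro j
    show bhat j - _ * 1 = _
    rw [mul_one]
  rw [hsub i, Finset.sum_congr rfl (fun j _ => hsub j), Finset.sum_sub_distrib,
    Finset.sum_const, Finset.card_univ, Fintype.card_fin, nsmul_eq_mul]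
  rw [hsplit2, hS, hb i]
  field_simp
  ring
end

section
/- s-efficiency of the Shapley Interaction Index: let d ≥ 1 and s₀ ≥ 1, and define the SII top-order weights m(t) := (d − t − s₀)! · t! / (d − s₀ + 1)!. Then for every T ⊆ Fin d with s₀ ≤ |T| ≤ d − s₀, Σ_{S ⊆ Fin d, |S| = s₀} (−1)^{s₀ − |T ∩ S|} · m(|T| − |T ∩ S|) = 0. -/
open Finset

private lemma sii_count (d s₀ k : ℕ) (T : Finset (Fin d)) (hk : k ≤ s₀) (hkT : k ≤ T.card)
    (hk2 : s₀ - k ≤ Tᶜ.card) :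
    ((Finset.powersetCard s₀ (Finset.univ : Finset (Fin d))).filter
        (fun S => (T ∩ S).card = k)).card = T.card.choose k * (Tᶜ.card).choose (s₀ - k) := by
  rw [← Finset.card_powersetCard, ← Finset.card_powersetCard, ← Finset.card_product]
  apply Finset.card_nbij' (fun S => (S ∩ T, S \ T)) (fun p => p.1 ∪ p.2)
  · intro S hS
    simp only [Finset.mem_coe, Finset.mem_filter, Finset.mem_powersetCard] at hS
    obtain ⟨⟨_, hcard⟩, hint⟩ := hS
    simp only [Finset.mem_coe, Finset.mem_product, Finset.mem_powersetCard]
    refine ⟨⟨Finset.inter_subset_right, by rwa [Finset.inter_comm]⟩,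
      ⟨fun x hx => by simp [Finset.mem_sdiff.mp hx |>.2], ?_⟩⟩
    have hST : (S ∩ T).card = k := by rw [Finset.inter_comm]; exact hint
    have := Finset.card_inter_add_card_sdiff S T
    omega
  · intro p hp
    simp only [Finset.mem_coe, Finset.mem_product, Finset.mem_powersetCard] at hp
    obtain ⟨⟨hp1, hc1⟩, hp2, hc2⟩ := hp
    simp only [Finset.mem_coe, Finset.mem_filter, Finset.mem_powersetCard]
    have hdisj : Disjoint p.1 p.2 := by
      refine Finset.disjoint_left.mpr fun x hx hx2 => ?_
      have := hp2 hx2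
      simp only [Finset.mem_compl] at this
      exact this (hp1 hx)
    constructor
    · exact ⟨Finset.subset_univ _, by rw [Finset.card_union_of_disjoint hdisj, hc1, hc2]; omega⟩
    · have : T ∩ (p.1 ∪ p.2) = p.1 := by
        rw [Finset.inter_union_distrib_left]
        have h2 : T ∩ p.2 = ∅ := by
          refine Finset.eq_empty_of_forall_notMem fun x hx => ?_
          have := hp2 (Finset.mem_inter.mp hx).2
          simp only [Finset.mem_compl] at this
          exact this (Finset.mem_inter.mp hx).1
        rw [h2, Finset.union_empty, Finset.inter_eq_right.mpr hp1]
      rw [this, hc1]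
  · intro S hS
    simp only
    rw [Finset.union_comm]
    exact Finset.sdiff_union_inter S T
  · intro p hp
    simp only [Finset.mem_coe, Finset.mem_product, Finset.mem_powersetCard] at hp
    obtain ⟨⟨hp1, hc1⟩, hp2, hc2⟩ := hp
    have h1 : (p.1 ∪ p.2) ∩ T = p.1 := by
      rw [Finset.union_inter_distrib_right, Finset.inter_eq_left.mpr hp1]
      have h2 : p.2 ∩ T = ∅ := by
        refine Finset.eq_empty_of_forall_notMem fun x hx => ?_
        have := hp2 (Finset.mem_inter.mp hx).1
        simp only [Finset.mem_compl] at this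
        exact this (Finset.mem_inter.mp hx).2
      rw [h2, Finset.union_empty]
    have h2 : (p.1 ∪ p.2) \ T = p.2 := by
      rw [Finset.union_sdiff_distrib]
      have : p.1 \ T = ∅ := Finset.sdiff_eq_empty_iff_subset.mpr hp1
      rw [this, Finset.empty_union, Finset.sdiff_eq_self_iff_disjoint]
      refine Finset.disjoint_left.mpr fun x hx hxT => ?_
      have := hp2 hx
      simp only [Finset.mem_compl] at this
      exact this hxT
    beta_reduce
    rw [h1, h2]

private lemma sii_nat_key (t n s k : ℕ) (hk : k ≤ s) (hkt : k ≤ t) (hsn : s - k ≤ n) :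
    t.choose k * n.choose (s - k) * Nat.factorial (n - (s - k)) * Nat.factorial (t - k) *
      Nat.factorial s =
    Nat.factorial t * Nat.factorial n * s.choose k := by
  have hpos : 0 < Nat.factorial k * Nat.factorial (s - k) := by positivity
  apply Nat.eq_of_mul_eq_mul_right hpos
  have A := Nat.choose_mul_factorial_mul_factorial hkt
  have B := Nat.choose_mul_factorial_mul_factorial hsn
  have C := Nat.choose_mul_factorial_mul_factorial hk
  calc t.choose k * n.choose (s - k) * Nat.factorial (n - (s - k)) * Nat.factorial (t - k) *
        Nat.factorial s * (Nat.factorial k * Nat.factorial (s - k))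
      = (t.choose k * Nat.factorial k * Nat.factorial (t - k)) *
        ((n.choose (s - k) * Nat.factorial (s - k) * Nat.factorial (n - (s - k)))) *
        Nat.factorial s := by ring
    _ = Nat.factorial t * Nat.factorial n * Nat.factorial s := by rw [A, B]
    _ = Nat.factorial t * Nat.factorial n *
        (s.choose k * Nat.factorial k * Nat.factorial (s - k)) := by rw [C]
    _ = Nat.factorial t * Nat.factorial n * s.choose k *
        (Nat.factorial k * Nat.factorial (s - k)) := by ring

/-- s-efficiency of the Shapley Interaction Index (part of Theorem 5 of SHAP-IQ):
for `s₀ ≤ |T| ≤ d − s₀` the SII top-order full-powerset weights over all `S` of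
size `s₀` sum to zero. -/
theorem sii_s_efficient
    (d s₀ : ℕ) (hd : 1 ≤ d) (hs : 1 ≤ s₀) (T : Finset (Fin d))
    (h1 : s₀ ≤ T.card) (h2 : T.card ≤ d - s₀) :
    ∑ S ∈ Finset.powersetCard s₀ (Finset.univ : Finset (Fin d)),
      (-1 : ℝ) ^ (s₀ - (T ∩ S).card) *
        ((Nat.factorial (d - (T.card - (T ∩ S).card) - s₀) : ℝ) *
          (Nat.factorial (T.card - (T ∩ S).card) : ℝ) /
          (Nat.factorial (d - s₀ + 1) : ℝ)) = 0 := by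
  set t := T.card with ht
  have htd : t ≤ d := (Finset.card_le_card (Finset.subset_univ T)).trans_eq (by simp)
  have hsd : s₀ ≤ d := h1.trans (h2.trans (Nat.sub_le d s₀))
  have hcompl : Tᶜ.card = d - t := by
    rw [Finset.card_compl, Fintype.card_fin]
  -- group the sum by k = |T ∩ S|
  have hmaps : ∀ S ∈ Finset.powersetCard s₀ (Finset.univ : Finset (Fin d)),
      (T ∩ S).card ∈ Finset.range (s₀ + 1) := by
    intro S hS
    rw [Finset.mem_powersetCard] at hS
    rw [Finset.mem_range, Nat.lt_succ_iff, ← hS.2]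
    exact Finset.card_le_card Finset.inter_subset_right
  rw [← Finset.sum_fiberwise_of_maps_to hmaps]
  have hstep : ∀ k ∈ Finset.range (s₀ + 1),
      ∑ S ∈ (Finset.powersetCard s₀ (Finset.univ : Finset (Fin d))).filter
          (fun S => (T ∩ S).card = k),
        (-1 : ℝ) ^ (s₀ - (T ∩ S).card) *
          ((Nat.factorial (d - (t - (T ∩ S).card) - s₀) : ℝ) *
            (Nat.factorial (t - (T ∩ S).card) : ℝ) /
            (Nat.factorial (d - s₀ + 1) : ℝ)) =
      ((-1 : ℝ) ^ s₀ * ((Nat.factorial t : ℝ) * (Nat.factorial (d - t) : ℝ) /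
          ((Nat.factorial (d - s₀ + 1) : ℝ) * (Nat.factorial s₀ : ℝ)))) *
        ((-1 : ℝ) ^ k * (s₀.choose k : ℝ)) := by
    intro k hk
    rw [Finset.mem_range, Nat.lt_succ_iff] at hk
    have hkt : k ≤ t := hk.trans h1
    have hk2 : s₀ - k ≤ Tᶜ.card := by rw [hcompl]; omega
    rw [Finset.sum_congr rfl (fun S hS => by
      rw [(Finset.mem_filter.mp hS).2]), Finset.sum_const,
      sii_count d s₀ k T hk hkt hk2, hcompl, nsmul_eq_mul]
    have hrw : d - (t - k) - s₀ = (d - t) - (s₀ - k) := by omega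
    rw [hrw]
    have key := sii_nat_key t (d - t) s₀ k hk hkt (by omega)
    have keyR : ((t.choose k : ℝ) * ((d - t).choose (s₀ - k) : ℝ) *
        (Nat.factorial ((d - t) - (s₀ - k)) : ℝ) * (Nat.factorial (t - k) : ℝ) *
        (Nat.factorial s₀ : ℝ)) =
        (Nat.factorial t : ℝ) * (Nat.factorial (d - t) : ℝ) * (s₀.choose k : ℝ) := by
      exact_mod_cast congrArg (Nat.cast : ℕ → ℝ) key
    have hsgn : (-1 : ℝ) ^ (s₀ - k) * (-1 : ℝ) ^ k = (-1 : ℝ) ^ s₀ := by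
      rw [← pow_add, Nat.sub_add_cancel hk]
    have hD : (Nat.factorial (d - s₀ + 1) : ℝ) ≠ 0 := by positivity
    have hS : (Nat.factorial s₀ : ℝ) ≠ 0 := by positivity
    have h2 : (-1 : ℝ) ^ k * (-1 : ℝ) ^ k = 1 := by
      rw [← pow_add]
      exact Even.neg_one_pow ⟨k, rfl⟩
    have hRHS : ((-1 : ℝ) ^ s₀ * ((Nat.factorial t : ℝ) * (Nat.factorial (d - t) : ℝ) /
          ((Nat.factorial (d - s₀ + 1) : ℝ) * (Nat.factorial s₀ : ℝ)))) *
          ((-1 : ℝ) ^ k * (s₀.choose k : ℝ)) =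
        (-1 : ℝ) ^ (s₀ - k) * ((Nat.factorial t : ℝ) * (Nat.factorial (d - t) : ℝ) *
          (s₀.choose k : ℝ) / ((Nat.factorial (d - s₀ + 1) : ℝ) * (Nat.factorial s₀ : ℝ))) := by
      calc ((-1 : ℝ) ^ s₀ * ((Nat.factorial t : ℝ) * (Nat.factorial (d - t) : ℝ) /
            ((Nat.factorial (d - s₀ + 1) : ℝ) * (Nat.factorial s₀ : ℝ)))) *
            ((-1 : ℝ) ^ k * (s₀.choose k : ℝ))
          = ((-1 : ℝ) ^ k * (-1 : ℝ) ^ k) * ((-1 : ℝ) ^ (s₀ - k) *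
            ((Nat.factorial t : ℝ) * (Nat.factorial (d - t) : ℝ) * (s₀.choose k : ℝ) /
              ((Nat.factorial (d - s₀ + 1) : ℝ) * (Nat.factorial s₀ : ℝ)))) := by
            rw [← hsgn]; ring
        _ = _ := by rw [h2, one_mul]
    rw [hRHS]
    field_simp
    rw [← ht]
    push_cast
    linear_combination keyR
  rw [Finset.sum_congr rfl hstep, ← Finset.mul_sum]
  have : ∑ k ∈ Finset.range (s₀ + 1), (-1 : ℝ) ^ k * (s₀.choose k : ℝ) = 0 := by
    have := add_pow (-1 : ℝ) 1 s₀
    simp only [one_pow, mul_one, neg_add_cancel] at this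
    rw [zero_pow (by omega)] at this
    rw [← this]
  rw [this, mul_zero]
end

section
/- Let s₀ ≥ 1, t and d be natural numbers with s₀ ≤ t ≤ d − s₀. Then the alternating binomial identity Σ_{k=0}^{s₀} (−1)^k · C(t, k) · C(d−t, s₀−k) / C(d−s₀, t−k) = 0 holds in ℝ. -/
open Nat


/-- Alternating binomial identity used for SII s-efficiency:
`Σ_{k=0}^{s₀} (−1)^k C(t,k) C(d−t,s₀−k) / C(d−s₀,t−k) = 0` for `s₀ ≤ t ≤ d − s₀`. -/
theorem alternating_binomial_identity_sii
    (d t s₀ : ℕ) (hs : 1 ≤ s₀) (h1 : s₀ ≤ t) (h2 : t ≤ d - s₀) :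
    ∑ k ∈ Finset.range (s₀ + 1),
      (-1 : ℝ) ^ k * (Nat.choose t k : ℝ) * (Nat.choose (d - t) (s₀ - k) : ℝ) /
        (Nat.choose (d - s₀) (t - k) : ℝ) = 0 := by
  have hd : s₀ + t ≤ d := by omega
  set A : ℝ := (t ! : ℝ) * (d - t)! / ((d - s₀)! * (s₀ !)) with hA
  have key : ∀ k ∈ Finset.range (s₀ + 1),
      (-1 : ℝ) ^ k * (Nat.choose t k : ℝ) * (Nat.choose (d - t) (s₀ - k) : ℝ) /
        (Nat.choose (d - s₀) (t - k) : ℝ)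
      = A * ((-1 : ℝ) ^ k * (Nat.choose s₀ k : ℝ)) := by
    intro k hk
    rw [Finset.mem_range] at hk
    have hk' : k ≤ s₀ := by omega
    have e1 : d - t - (s₀ - k) = d - s₀ - (t - k) := by omega
    rw [Nat.cast_choose ℝ (show k ≤ t by omega),
        Nat.cast_choose ℝ (show s₀ - k ≤ d - t by omega),
        Nat.cast_choose ℝ (show t - k ≤ d - s₀ by omega),
        Nat.cast_choose ℝ hk', e1, hA]
    have n1 : ((k ! : ℝ)) ≠ 0 := by positivity
    have n2 : (((t - k)! : ℝ)) ≠ 0 := by positivity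
    have n3 : (((s₀ - k)! : ℝ)) ≠ 0 := by positivity
    have n4 : (((d - s₀ - (t - k))! : ℝ)) ≠ 0 := by positivity
    have n5 : (((d - s₀)! : ℝ)) ≠ 0 := by positivity
    have n6 : ((s₀ ! : ℝ)) ≠ 0 := by positivity
    field_simp
  rw [Finset.sum_congr rfl key, ← Finset.mul_sum]
  have : ∑ k ∈ Finset.range (s₀ + 1), (-1 : ℝ) ^ k * (Nat.choose s₀ k : ℝ) = 0 := by
    have := Int.alternating_sum_range_choose_of_ne (show s₀ ≠ 0 by omega)
    have h := congrArg (fun z : ℤ => (z : ℝ)) this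
    push_cast at h
    simpa using h
  rw [this, mul_zero]
end

section
/- s-efficiency of the Shapley Taylor Interaction Index: let d ≥ 1 and s₀ ≥ 1, and define the STI top-order weights m(t) := s₀ · (d − t − 1)! · t! / d!. Then for every T ⊆ Fin d with s₀ ≤ |T| ≤ d − s₀, Σ_{S ⊆ Fin d, |S| = s₀} (−1)^{s₀ − |T ∩ S|} · m(|T| − |T ∩ S|) = 0. -/
/-!
Write `t = |T|` and group the sets `S` by `k = |T ∩ S|`: there are `C(t, k) C(d - t, s₀ - k)` of
them. After pulling out the constant `s₀ t! (d - t)! / (d! s₀!)`, the `k`-th term becomes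
`(-1)^(s₀ - k) C(s₀, k) (d - t - 1 + k) ⋯ (d - t - s₀ + 1 + k)`, whose last factor is a
polynomial of degree `s₀ - 1` in `k`. The sum is thus the `s₀`-th forward difference of a
polynomial of degree `< s₀`, which vanishes.
-/

open Finset Polynomial Nat

theorem Polynomial.sum_range_alternating_choose_mul_eval_eq_zero {R : Type*} [CommRing R]
    {P : R[X]} {n : ℕ} (hP : P.natDegree < n) (y : R) :
    ∑ k ∈ range (n + 1), (-1 : R) ^ (n - k) * n.choose k * P.eval (y + k) = 0 := by
  have h := congr_fun (fwdDiff_iter_eq_zero_of_degree_lt hP) y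
  rw [fwdDiff_iter_eq_sum_shift] at h
  simpa [zsmul_eq_mul] using h

theorem descPochhammer_natDegree_le {R : Type*} [CommRing R] (j : ℕ) :
    (descPochhammer R j).natDegree ≤ j := by
  rw [← descPochhammer_map (Int.castRingHom R)]
  exact natDegree_map_le.trans (descPochhammer_natDegree ℤ j).le

theorem sum_range_alternating_choose_mul_descFactorial_eq_zero {R : Type*} [CommRing R]
    {j n : ℕ} (hj : j < n) (m : ℕ) :
    ∑ k ∈ range (n + 1), (-1 : R) ^ (n - k) * n.choose k * ((m + k).descFactorial j : R) =
      0 := by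
  simpa [← Nat.cast_add, descPochhammer_eval_eq_descFactorial] using
    sum_range_alternating_choose_mul_eval_eq_zero
      ((descPochhammer_natDegree_le j).trans_lt hj) (m : R)

section
variable {α : Type*} [Fintype α] [DecidableEq α]

theorem card_powersetCard_filter_card_inter (T : Finset α) {s k : ℕ} (hk : k ≤ s) :
    #{S ∈ powersetCard s univ | #(T ∩ S) = k} =
      (#T).choose k * (Fintype.card α - #T).choose (s - k) := by
  rw [← card_powersetCard k T, ← card_compl, ← card_powersetCard, ← card_product]
  apply card_nbij' (fun S => (T ∩ S, S \ T)) (fun p => p.1 ∪ p.2)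
  · intro S hS
    simp only [coe_filter, mem_powersetCard, subset_univ, true_and] at hS
    have := card_inter_add_card_sdiff S T
    simp only [coe_product, inter_comm T S, Set.mem_prod, mem_coe, mem_powersetCard,
      inter_subset_right, true_and, subset_compl_iff_disjoint_left, disjoint_sdiff]
    grind
  · rintro ⟨A, B⟩ h
    simp only [coe_product, Set.mem_prod, mem_coe, mem_powersetCard,
      subset_compl_iff_disjoint_left] at h
    obtain ⟨⟨hAT, rfl⟩, hBT, hB⟩ := h
    have hinter : T ∩ (A ∪ B) = A := by
      rw [inter_union_distrib_left, inter_eq_right.2 hAT, disjoint_iff_inter_eq_empty.1 hBT,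
        union_empty]
    simp only [coe_filter, mem_powersetCard, subset_univ, true_and, Set.mem_ofPred_eq,
      card_union_of_disjoint (hBT.mono_left hAT), hinter, and_true]
    omega
  · intro S _
    dsimp only
    rw [union_comm, inter_comm, sdiff_union_inter]
  · rintro ⟨A, B⟩ h
    simp only [coe_product, Set.mem_prod, mem_coe, mem_powersetCard,
      subset_compl_iff_disjoint_left] at h
    obtain ⟨⟨hAT, -⟩, hBT, -⟩ := h
    simp only [Prod.mk.injEq]
    constructor <;> ext x <;> grind [disjoint_left]

theorem sum_powersetCard_comp_card_inter {M : Type*} [AddCommMonoid M] (T : Finset α) (s : ℕ)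
    (f : ℕ → M) :
    ∑ S ∈ powersetCard s univ, f #(T ∩ S) =
      ∑ k ∈ range (s + 1), ((#T).choose k * (Fintype.card α - #T).choose (s - k)) • f k := by
  rw [← sum_fiberwise_of_maps_to (g := fun S => #(T ∩ S)) (t := range (s + 1))]
  · refine sum_congr rfl fun k hk => ?_
    rw [sum_congr rfl fun S hS => congrArg f (mem_filter.1 hS).2, sum_const,
      card_powersetCard_filter_card_inter T (mem_range_succ_iff.1 hk)]
  · intro S hS
    rw [mem_range_succ_iff, ← (mem_powersetCard.1 hS).2]
    exact card_le_card inter_subset_right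
end

theorem choose_mul_choose_mul_factorial_eq_choose_mul_descFactorial {t e s k : ℕ} (hs : 1 ≤ s)
    (hks : k ≤ s) (hkt : k ≤ t) (hse : s ≤ e) :
    t.choose k * e.choose (s - k) * (e + k - 1)! * (t - k)! * s ! =
      s.choose k * (e - 1 + k).descFactorial (s - 1) * t ! * e ! := by
  have hdesc : (e + k - 1)! = (e + k - s)! * (e - 1 + k).descFactorial (s - 1) := by
    rw [show e - 1 + k = e + k - 1 by omega,
      ← factorial_mul_descFactorial (n := e + k - 1) (k := s - 1) (by omega),
      show e + k - 1 - (s - 1) = e + k - s by omega]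
  have he : e.choose (s - k) * (s - k)! * (e + k - s)! = e ! := by
    rw [show e + k - s = e - (s - k) by omega, choose_mul_factorial_mul_factorial (by omega)]
  apply Nat.eq_of_mul_eq_mul_right (by positivity : 0 < k ! * (s - k)!)
  calc t.choose k * e.choose (s - k) * (e + k - 1)! * (t - k)! * s ! * (k ! * (s - k)!)
      = (t.choose k * k ! * (t - k)!) * (e.choose (s - k) * (s - k)! * (e + k - s)!) *
          (e - 1 + k).descFactorial (s - 1) * s ! := by rw [hdesc]; ring
    _ = (s.choose k * k ! * (s - k)!) * (e - 1 + k).descFactorial (s - 1) * t ! * e ! := by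
          rw [choose_mul_factorial_mul_factorial hkt, he, choose_mul_factorial_mul_factorial hks]
          ring
    _ = _ := by ring

theorem sti_s_efficient_general
    (d s₀ : ℕ) (hs : 1 ≤ s₀) (T : Finset (Fin d))
    (h1 : s₀ ≤ T.card) (h2 : T.card ≤ d - s₀) :
    ∑ S ∈ Finset.powersetCard s₀ (Finset.univ : Finset (Fin d)),
      (-1 : ℝ) ^ (s₀ - (T ∩ S).card) *
        ((s₀ : ℝ) * (Nat.factorial (d - (T.card - (T ∩ S).card) - 1) : ℝ) *
          (Nat.factorial (T.card - (T ∩ S).card) : ℝ) / (Nat.factorial d : ℝ)) = 0 := by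
  rw [sum_powersetCard_comp_card_inter T s₀
      (fun k => (-1 : ℝ) ^ (s₀ - k) * (s₀ * (d - (#T - k) - 1)! * (#T - k)! / d !)),
    Fintype.card_fin]
  set t := #T
  have hse : s₀ ≤ d - t := by omega
  calc _ = (s₀ * t ! * (d - t)! / (d ! * s₀ !) : ℝ) *
        ∑ k ∈ range (s₀ + 1),
          (-1 : ℝ) ^ (s₀ - k) * s₀.choose k *
            ((d - t - 1 + k).descFactorial (s₀ - 1) : ℝ) := by
        rw [mul_sum]
        refine sum_congr rfl fun k hk => ?_
        have hks := mem_range_succ_iff.1 hk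
        have h := congrArg (Nat.cast : ℕ → ℝ)
          (choose_mul_choose_mul_factorial_eq_choose_mul_descFactorial hs hks (hks.trans h1) hse)
        rw [show d - (t - k) - 1 = d - t + k - 1 by omega, nsmul_eq_mul]
        push_cast at h ⊢
        field_simp
        linear_combination h
    _ = 0 := by rw [sum_range_alternating_choose_mul_descFactorial_eq_zero (by omega), mul_zero]

/-- s-efficiency of the Shapley Taylor Interaction Index (part of Theorem 5 of SHAP-IQ):
for `s₀ ≤ |T| ≤ d − s₀` the STI top-order full-powerset weights over all `S` of size
`s₀` sum to zero. -/
theorem sti_s_efficient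
    (d s₀ : ℕ) (hd : 1 ≤ d) (hs : 1 ≤ s₀) (T : Finset (Fin d))
    (h1 : s₀ ≤ T.card) (h2 : T.card ≤ d - s₀) :
    ∑ S ∈ Finset.powersetCard s₀ (Finset.univ : Finset (Fin d)),
      (-1 : ℝ) ^ (s₀ - (T ∩ S).card) *
        ((s₀ : ℝ) * (Nat.factorial (d - (T.card - (T ∩ S).card) - 1) : ℝ) *
          (Nat.factorial (T.card - (T ∩ S).card) : ℝ) / (Nat.factorial d : ℝ)) = 0 :=
  sti_s_efficient_general d s₀ hs T h1 h2
end

section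
/- Closed form of the boundary weight sum for SII: let s₀ ≥ 1, t and d be natural numbers with t < s₀ and s₀ + t ≤ d. Then Σ_{k=0}^{t} (−1)^{s₀ − k} · C(t, k) · C(d−t, s₀−k) / C(d−s₀, t−k) = (−1)^{s₀ + t} · (d − s₀ + 1) · C(d−t, s₀−t−1) / s₀ in ℝ. (Equivalently, with the SII weights m(t) := (d−t−s₀)! t!/(d−s₀+1)!, for every T ⊆ Fin d with |T| = t < s₀ one has Σ_{S ⊆ Fin d, |S| = s₀} (−1)^{s₀−|T∩S|} m(|T|−|T∩S|) = ((−1)^{s₀+t}/s₀) · C(d−t, s₀−t−1).) -/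
lemma alt_partial_sum_choose (n : ℕ) (hn : 1 ≤ n) (t : ℕ) :
    ∑ k ∈ Finset.range (t + 1), (-1 : ℝ) ^ k * (Nat.choose n k : ℝ)
      = (-1 : ℝ) ^ t * (Nat.choose (n - 1) t : ℝ) := by
  induction t with
  | zero => simp
  | succ t ih =>
    rw [Finset.sum_range_succ, ih]
    have hpascal : (Nat.choose n (t + 1) : ℝ)
        = (Nat.choose (n - 1) t : ℝ) + (Nat.choose (n - 1) (t + 1) : ℝ) := by
      have h1 : n - 1 + 1 = n := Nat.succ_pred_eq_of_pos hn
      rw [← h1, Nat.choose_succ_succ]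
      push_cast
      ring
    rw [hpascal]
    ring

/-- Closed form of the boundary weight sum for SII (Proposition on the sum of SII scores):
`Σ_{k=0}^{t} (−1)^{s₀−k} C(t,k) C(d−t,s₀−k)/C(d−s₀,t−k)
  = (−1)^{s₀+t} (d−s₀+1) C(d−t,s₀−t−1)/s₀` for `t < s₀` and `s₀ + t ≤ d`. -/
theorem sii_boundary_weight_sum_closed_form
    (d t s₀ : ℕ) (hs : 1 ≤ s₀) (ht : t < s₀) (htd : s₀ + t ≤ d) :
    ∑ k ∈ Finset.range (t + 1),
      (-1 : ℝ) ^ (s₀ - k) * (Nat.choose t k : ℝ) * (Nat.choose (d - t) (s₀ - k) : ℝ) /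
        (Nat.choose (d - s₀) (t - k) : ℝ) =
    (-1 : ℝ) ^ (s₀ + t) * ((d - s₀ + 1 : ℕ) : ℝ) *
      (Nat.choose (d - t) (s₀ - t - 1) : ℝ) / (s₀ : ℝ) := by
  set c : ℝ := (t.factorial : ℝ) * ((d - t).factorial : ℝ)
      / (((d - s₀).factorial : ℝ) * (s₀.factorial : ℝ)) with hc
  have hstep : ∀ k ∈ Finset.range (t + 1),
      (-1 : ℝ) ^ (s₀ - k) * (Nat.choose t k : ℝ) * (Nat.choose (d - t) (s₀ - k) : ℝ) /
        (Nat.choose (d - s₀) (t - k) : ℝ)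
      = ((-1 : ℝ) ^ s₀ * c) * ((-1 : ℝ) ^ k * (Nat.choose s₀ k : ℝ)) := by
    intro k hk
    rw [Finset.mem_range] at hk
    have hkt : k ≤ t := Nat.lt_succ_iff.mp hk
    have hks : k ≤ s₀ := le_of_lt (lt_of_le_of_lt hkt ht)
    have h1 : s₀ - k ≤ d - t := by omega
    have h2 : t - k ≤ d - s₀ := by omega
    have hsign : (-1 : ℝ) ^ (s₀ - k) = (-1 : ℝ) ^ s₀ * (-1 : ℝ) ^ k := by
      have he : ((-1 : ℝ) ^ k) * ((-1 : ℝ) ^ k) = 1 := by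
        rw [← pow_add]
        exact Even.neg_one_pow ⟨k, rfl⟩
      have hsk : s₀ - k + k = s₀ := by omega
      calc (-1 : ℝ) ^ (s₀ - k) = (-1 : ℝ) ^ (s₀ - k) * (((-1 : ℝ) ^ k) * ((-1 : ℝ) ^ k)) := by
            rw [he, mul_one]
        _ = ((-1 : ℝ) ^ (s₀ - k) * (-1 : ℝ) ^ k) * (-1 : ℝ) ^ k := by ring
        _ = (-1 : ℝ) ^ s₀ * (-1 : ℝ) ^ k := by rw [← pow_add, hsk]
    have hsub : d - t - (s₀ - k) = d - s₀ - (t - k) := by omega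
    rw [hsign, Nat.cast_choose ℝ hkt, Nat.cast_choose ℝ h1, Nat.cast_choose ℝ h2,
      Nat.cast_choose ℝ hks, hsub, hc]
    have f1 : ((k.factorial : ℝ)) ≠ 0 := by positivity
    have f2 : (((t - k).factorial : ℝ)) ≠ 0 := by positivity
    have f3 : (((s₀ - k).factorial : ℝ)) ≠ 0 := by positivity
    have f4 : (((d - s₀ - (t - k)).factorial : ℝ)) ≠ 0 := by positivity
    have f5 : (((d - s₀).factorial : ℝ)) ≠ 0 := by positivity
    have f6 : ((s₀.factorial : ℝ)) ≠ 0 := by positivity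
    field_simp
  rw [Finset.sum_congr rfl hstep, ← Finset.mul_sum, alt_partial_sum_choose s₀ hs t]
  have htles : t ≤ s₀ - 1 := by omega
  have hles2 : s₀ - t - 1 ≤ d - t := by omega
  have hsubA : s₀ - 1 - t = s₀ - t - 1 := by omega
  have hsubB : d - t - (s₀ - t - 1) = d - s₀ + 1 := by omega
  have hfs : (s₀.factorial : ℝ) = (s₀ : ℝ) * ((s₀ - 1).factorial : ℝ) := by
    have h1 : s₀ = (s₀ - 1) + 1 := by omega
    rw [h1, Nat.factorial_succ]
    push_cast
    ring
  have hfd : (((d - s₀ + 1).factorial : ℝ)) = ((d - s₀ + 1 : ℕ) : ℝ) * ((d - s₀).factorial : ℝ) := by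
    rw [Nat.factorial_succ]
    push_cast
    ring
  rw [hc, Nat.cast_choose ℝ htles, Nat.cast_choose ℝ hles2, hsubA, hsubB, pow_add, hfs, hfd]
  have f1 : (((s₀ - 1).factorial : ℝ)) ≠ 0 := by positivity
  have f2 : (((s₀ - t - 1).factorial : ℝ)) ≠ 0 := by positivity
  have f3 : (((d - s₀).factorial : ℝ)) ≠ 0 := by positivity
  have f4 : ((t.factorial : ℝ)) ≠ 0 := by positivity
  have f5 : ((s₀ : ℝ)) ≠ 0 := by positivity
  have f6 : ((d - s₀ + 1 : ℕ) : ℝ) ≠ 0 := by positivity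
  field_simp
end

section
/- Sum of SII scores: let d and s₀ be natural numbers with 1 ≤ s₀ and 2s₀ ≤ d, let ν : Finset (Fin d) → ℝ be a game, and let I^SII(S) := Σ_{T ⊆ (Fin d) \ S} m(|T|) δ_S^ν(T) with m(t) := (d − t − s₀)! · t! / (d − s₀ + 1)!. Then Σ_{S ⊆ Fin d, |S| = s₀} I^SII(S) = Σ_{T ⊆ Fin d, |T| < s₀} (−1)^{|T|} · (1/s₀) · C(d − |T|, s₀ − |T| − 1) · ((−1)^{s₀} · ν(T) + ν((Fin d) \ T)). -/
open Finset

lemma alt_partial (n k : ℕ) :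
    ∑ i ∈ range (k+1), (-1:ℝ)^i * ((n+1).choose i) = (-1)^k * (n.choose k) := by
  induction k with
  | zero => simp
  | succ k ih =>
    rw [Finset.sum_range_succ, ih, Nat.choose_succ_succ]
    push_cast
    ring

noncomputable def mQ (d s₀ t : ℕ) : ℝ :=
  (Nat.factorial (d - t - s₀) : ℝ) * (Nat.factorial t : ℝ) / (Nat.factorial (d - s₀ + 1) : ℝ)

noncomputable def cQ (d s₀ a : ℕ) : ℝ :=
  ∑ l ∈ range (s₀+1), (-1:ℝ)^(s₀-l) * (a.choose l) * ((d-a).choose (s₀-l)) * mQ d s₀ (a-l)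

noncomputable def tgtQ (d s₀ a : ℕ) : ℝ :=
  if a < s₀ then (-1:ℝ)^(a+s₀) * (1/(s₀:ℝ)) * ((d-a).choose (s₀-a-1))
  else if d - a < s₀ then (-1:ℝ)^(d-a) * (1/(s₀:ℝ)) * (a.choose (s₀-(d-a)-1))
  else 0

lemma neg_one_pow_sub {s l : ℕ} (h : l ≤ s) :
    (-1:ℝ)^(s-l) = (-1)^s * (-1)^l := by
  have hyy : ((-1:ℝ))^l * (-1)^l = 1 := by rw [← mul_pow]; norm_num
  have h1 : (-1:ℝ)^(s-l) * (-1)^l = (-1)^s := by rw [← pow_add]; congr 1; omega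
  calc (-1:ℝ)^(s-l) = (-1)^(s-l) * ((-1)^l * (-1)^l) := by rw [hyy, mul_one]
    _ = ((-1)^(s-l) * (-1)^l) * (-1)^l := by ring
    _ = (-1)^s * (-1)^l := by rw [h1]

lemma term_eq' (d s₀ a l : ℕ) (hla : l ≤ a) (hls : l ≤ s₀) (hsl : s₀ - l ≤ d - a)
    (had : a ≤ d) :
    (-1:ℝ)^(s₀-l) * (a.choose l) * ((d-a).choose (s₀-l)) * mQ d s₀ (a-l)
      = ((Nat.factorial a : ℝ) * (Nat.factorial (d-a)) /
          ((Nat.factorial s₀) * (Nat.factorial (d-s₀+1))) * (-1:ℝ)^s₀)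
        * ((-1:ℝ)^l * (s₀.choose l)) := by
  rw [mQ, Nat.cast_choose ℝ hla, Nat.cast_choose ℝ (show s₀ - l ≤ d - a from hsl),
    Nat.cast_choose ℝ hls, neg_one_pow_sub hls]
  have e1 : d - a - (s₀ - l) = d - (a - l) - s₀ := by omega
  rw [e1]
  have f1 : ((Nat.factorial l : ℝ)) ≠ 0 := Nat.cast_ne_zero.mpr (Nat.factorial_ne_zero l)
  have f2 : ((Nat.factorial (a-l) : ℝ)) ≠ 0 := Nat.cast_ne_zero.mpr (Nat.factorial_ne_zero _)
  have f3 : ((Nat.factorial (s₀-l) : ℝ)) ≠ 0 := Nat.cast_ne_zero.mpr (Nat.factorial_ne_zero _)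
  have f4 : ((Nat.factorial (d-(a-l)-s₀) : ℝ)) ≠ 0 := Nat.cast_ne_zero.mpr (Nat.factorial_ne_zero _)
  have f5 : ((Nat.factorial (d-s₀+1) : ℝ)) ≠ 0 := Nat.cast_ne_zero.mpr (Nat.factorial_ne_zero _)
  have f6 : ((Nat.factorial s₀ : ℝ)) ≠ 0 := Nat.cast_ne_zero.mpr (Nat.factorial_ne_zero _)
  field_simp

lemma cQ_small (d s₀ a : ℕ) (hs : 1 ≤ s₀) (h2s : 2 * s₀ ≤ d) (ha : a < s₀) :
    cQ d s₀ a = (-1:ℝ)^(a+s₀) * (1/(s₀:ℝ)) * ((d-a).choose (s₀-a-1)) := by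
  have key : cQ d s₀ a
      = ∑ l ∈ range (a+1),
          ((Nat.factorial a : ℝ) * (Nat.factorial (d-a)) /
            ((Nat.factorial s₀) * (Nat.factorial (d-s₀+1))) * (-1:ℝ)^s₀)
          * ((-1:ℝ)^l * (s₀.choose l)) := by
    rw [cQ, ← Finset.sum_subset (Finset.range_subset_range.mpr (by omega : a+1 ≤ s₀+1))]
    · apply Finset.sum_congr rfl
      intro l hl
      rw [Finset.mem_range] at hl
      exact term_eq' d s₀ a l (by omega) (by omega) (by omega) (by omega)
    · intro l hl hnl
      rw [Finset.mem_range] at hl hnl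
      have : a < l := by omega
      simp [Nat.choose_eq_zero_of_lt this]
  rw [key, ← Finset.mul_sum]
  have hss : s₀ - 1 + 1 = s₀ := by omega
  have h := alt_partial (s₀ - 1) a
  rw [hss] at h
  rw [h]
  have hchoose1 : ((s₀-1).choose a : ℝ)
      = (Nat.factorial (s₀-1)) / ((Nat.factorial a) * (Nat.factorial (s₀-1-a))) :=
    Nat.cast_choose ℝ (by omega)
  have hchoose2 : ((d-a).choose (s₀-a-1) : ℝ)
      = (Nat.factorial (d-a)) / ((Nat.factorial (s₀-a-1)) * (Nat.factorial (d-s₀+1))) := by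
    rw [Nat.cast_choose ℝ (by omega : s₀-a-1 ≤ d-a)]
    have e : d - a - (s₀ - a - 1) = d - s₀ + 1 := by omega
    rw [e]
  have hfac : (Nat.factorial s₀ : ℝ) = (s₀ : ℝ) * (Nat.factorial (s₀-1)) := by
    rw_mod_cast [Nat.mul_factorial_pred (by omega : s₀ ≠ 0)]
  have e2 : s₀ - 1 - a = s₀ - a - 1 := by omega
  rw [hchoose1, hchoose2, hfac, e2]
  have f1 : ((Nat.factorial a : ℝ)) ≠ 0 := Nat.cast_ne_zero.mpr (Nat.factorial_ne_zero _)
  have f2 : ((Nat.factorial (s₀-a-1) : ℝ)) ≠ 0 := Nat.cast_ne_zero.mpr (Nat.factorial_ne_zero _)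
  have f3 : ((Nat.factorial (s₀-1) : ℝ)) ≠ 0 := Nat.cast_ne_zero.mpr (Nat.factorial_ne_zero _)
  have f4 : ((Nat.factorial (d-s₀+1) : ℝ)) ≠ 0 := Nat.cast_ne_zero.mpr (Nat.factorial_ne_zero _)
  have f5 : ((Nat.factorial (d-a) : ℝ)) ≠ 0 := Nat.cast_ne_zero.mpr (Nat.factorial_ne_zero _)
  have f6 : (s₀:ℝ) ≠ 0 := Nat.cast_ne_zero.mpr (by omega)
  have hsign : (-1:ℝ)^(a+s₀) = (-1)^s₀ * (-1)^a := by rw [pow_add]; ring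
  rw [hsign]
  field_simp

lemma cQ_mid (d s₀ a : ℕ) (hs : 1 ≤ s₀) (h1 : s₀ ≤ a) (h3 : a + s₀ ≤ d) :
    cQ d s₀ a = 0 := by
  have key : cQ d s₀ a
      = ∑ l ∈ range (s₀+1),
          ((Nat.factorial a : ℝ) * (Nat.factorial (d-a)) /
            ((Nat.factorial s₀) * (Nat.factorial (d-s₀+1))) * (-1:ℝ)^s₀)
          * ((-1:ℝ)^l * (s₀.choose l)) := by
    rw [cQ]
    apply Finset.sum_congr rfl
    intro l hl
    rw [Finset.mem_range] at hl
    exact term_eq' d s₀ a l (by omega) (by omega) (by omega) (by omega)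
  rw [key, ← Finset.mul_sum]
  have hss : s₀ - 1 + 1 = s₀ := by omega
  have h := alt_partial (s₀ - 1) s₀
  rw [hss] at h
  rw [h, Nat.choose_eq_zero_of_lt (by omega : s₀ - 1 < s₀)]
  simp

lemma cQ_reflect (d s₀ a : ℕ) (ha : a ≤ d) :
    cQ d s₀ a = (-1:ℝ)^s₀ * cQ d s₀ (d-a) := by
  rw [cQ, cQ, Finset.mul_sum, ← Finset.sum_range_reflect]
  apply Finset.sum_congr rfl
  intro j hj
  rw [Finset.mem_range] at hj
  have hj' : j ≤ s₀ := by omega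
  have e0 : s₀ + 1 - 1 - j = s₀ - j := by omega
  have e1 : s₀ - (s₀ - j) = j := by omega
  have e2 : d - (d - a) = a := by omega
  rw [e0, e1, e2]
  by_cases h1 : s₀ - j ≤ a
  · by_cases h2 : j ≤ d - a
    · have hm : mQ d s₀ (a - (s₀ - j)) = mQ d s₀ (d - a - j) := by
        have g1 : d - (a - (s₀ - j)) - s₀ = d - a - j := by omega
        have g2 : d - (d - a - j) - s₀ = a - (s₀ - j) := by omega
        rw [mQ, mQ, g1, g2]
        ring
      rw [hm]
      have hsgn : (-1:ℝ)^s₀ * (-1)^(s₀-j) = (-1)^j := by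
        rw [neg_one_pow_sub hj', ← mul_assoc, ← mul_pow]
        norm_num
      linear_combination (-((a.choose (s₀-j) : ℝ) * ((d-a).choose j) * mQ d s₀ (d-a-j))) * hsgn
    · have hlt : d - a < j := by omega
      simp [Nat.choose_eq_zero_of_lt hlt]
  · have hlt : a < s₀ - j := by omega
    simp [Nat.choose_eq_zero_of_lt hlt]

lemma cQ_eq_tgtQ (d s₀ a : ℕ) (hs : 1 ≤ s₀) (h2s : 2 * s₀ ≤ d) (ha : a ≤ d) :
    cQ d s₀ a = tgtQ d s₀ a := by
  rcases lt_or_ge a s₀ with h | h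
  · rw [tgtQ, if_pos h]
    exact cQ_small d s₀ a hs h2s h
  · rcases lt_or_ge (d - a) s₀ with h' | h'
    · rw [tgtQ, if_neg (not_lt.mpr h), if_pos h']
      rw [cQ_reflect d s₀ a ha, cQ_small d s₀ (d-a) hs h2s h']
      have e2 : d - (d - a) = a := by omega
      rw [e2]
      have hsgn : (-1:ℝ)^s₀ * (-1)^((d-a)+s₀) = (-1)^(d-a) := by
        rw [← pow_add]
        have e3 : s₀ + (d - a + s₀) = d - a + 2 * s₀ := by omega
        rw [e3, pow_add, pow_mul]
        norm_num
      linear_combination ((1/(s₀:ℝ)) * (a.choose (s₀-(d-a)-1))) * hsgn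
    · rw [tgtQ, if_neg (not_lt.mpr h), if_neg (not_lt.mpr h')]
      exact cQ_mid d s₀ a hs h (by omega)

lemma fiber_card (d : ℕ) (A : Finset (Fin d)) (s₀ l : ℕ) (hl : l ≤ s₀) :
    ((Finset.powersetCard s₀ (Finset.univ : Finset (Fin d))).filter
        (fun S => (A ∩ S).card = l)).card
      = A.card.choose l * (d - A.card).choose (s₀ - l) := by
  classical
  have hAc : (Aᶜ : Finset (Fin d)).card = d - A.card := by
    rw [Finset.card_compl, Fintype.card_fin]
  rw [← hAc, ← Finset.card_powersetCard, ← Finset.card_powersetCard,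
    ← Finset.card_product]
  apply Finset.card_nbij' (fun S => (A ∩ S, S \ A)) (fun p => p.1 ∪ p.2)
  · intro S hS
    simp only [Finset.mem_coe, Finset.mem_filter, Finset.mem_powersetCard] at hS
    obtain ⟨⟨_, hcard⟩, hint⟩ := hS
    simp only [Finset.mem_coe, Finset.mem_product, Finset.mem_powersetCard]
    refine ⟨⟨Finset.inter_subset_left, hint⟩, ?_, ?_⟩
    · intro x hx
      simp only [Finset.mem_sdiff, Finset.mem_compl] at hx ⊢
      exact hx.2
    · have h1 : (S \ A).card + (S ∩ A).card = S.card :=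
        Finset.card_sdiff_add_card_inter S A
      rw [Finset.inter_comm] at hint
      omega
  · intro p hp
    simp only [Finset.mem_coe, Finset.mem_product, Finset.mem_powersetCard] at hp
    obtain ⟨⟨hp1, hc1⟩, hp2, hc2⟩ := hp
    have hdisj : Disjoint p.1 p.2 := by
      apply Finset.disjoint_left.mpr
      intro x hx1 hx2
      exact absurd (hp1 hx1) (Finset.mem_compl.mp (hp2 hx2))
    simp only [Finset.mem_coe, Finset.mem_filter, Finset.mem_powersetCard]
    have hinter : A ∩ (p.1 ∪ p.2) = p.1 := by
      rw [Finset.inter_union_distrib_left]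
      have h1 : A ∩ p.1 = p.1 := Finset.inter_eq_right.mpr hp1
      have h2 : A ∩ p.2 = ∅ := by
        apply Finset.eq_empty_of_forall_notMem
        intro x hx
        simp only [Finset.mem_inter] at hx
        exact absurd hx.1 (Finset.mem_compl.mp (hp2 hx.2))
      rw [h1, h2, Finset.union_empty]
    refine ⟨⟨Finset.subset_univ _, ?_⟩, by rw [hinter, hc1]⟩
    rw [Finset.card_union_of_disjoint hdisj, hc1, hc2]
    omega
  · intro S hS
    simp only [Finset.mem_coe, Finset.mem_filter, Finset.mem_powersetCard] at hS
    simp only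
    rw [Finset.inter_comm, Finset.union_comm, Finset.sdiff_union_inter]
  · intro p hp
    simp only [Finset.mem_coe, Finset.mem_product, Finset.mem_powersetCard] at hp
    obtain ⟨⟨hp1, _⟩, hp2, _⟩ := hp
    have h2 : A ∩ p.2 = ∅ := by
      apply Finset.eq_empty_of_forall_notMem
      intro x hx
      simp only [Finset.mem_inter] at hx
      exact absurd hx.1 (Finset.mem_compl.mp (hp2 hx.2))
    have hinter : A ∩ (p.1 ∪ p.2) = p.1 := by
      rw [Finset.inter_union_distrib_left, Finset.inter_eq_right.mpr hp1, h2,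
        Finset.union_empty]
    have hsd : (p.1 ∪ p.2) \ A = p.2 := by
      rw [Finset.union_sdiff_distrib]
      have : p.1 \ A = ∅ := Finset.sdiff_eq_empty_iff_subset.mpr hp1
      rw [this, Finset.empty_union]
      apply Finset.sdiff_eq_self_of_disjoint
      apply Finset.disjoint_left.mpr
      intro x hx2 hxA
      exact absurd hxA (Finset.mem_compl.mp (hp2 hx2))
    simp only [hinter, hsd]

lemma split_sets {d : ℕ} {S T L : Finset (Fin d)} (hT : T ⊆ univ \ S) (hL : L ⊆ S) :
    (T ∪ L) \ S = T ∧ (T ∪ L) ∩ S = L := by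
  have hdisj : Disjoint T S := by
    apply Finset.disjoint_left.mpr
    intro x hxT hxS
    exact (Finset.mem_sdiff.mp (hT hxT)).2 hxS
  constructor
  · rw [Finset.union_sdiff_distrib, Finset.sdiff_eq_self_of_disjoint hdisj,
      Finset.sdiff_eq_empty_iff_subset.mpr hL, Finset.union_empty]
  · rw [Finset.union_inter_distrib_right, Finset.disjoint_iff_inter_eq_empty.mp hdisj,
      Finset.inter_eq_left.mpr hL, Finset.empty_union]

lemma inner_eq (d s₀ : ℕ) (ν : Finset (Fin d) → ℝ) (S : Finset (Fin d)) :
    ∑ T ∈ ((univ : Finset (Fin d)) \ S).powerset,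
      mQ d s₀ T.card * ∑ L ∈ S.powerset, (-1:ℝ)^(s₀ - L.card) * ν (T ∪ L)
    = ∑ A ∈ (univ : Finset (Fin d)).powerset,
        (-1:ℝ)^(s₀ - (A ∩ S).card) * mQ d s₀ ((A \ S).card) * ν A := by
  have hcongr : ∀ T ∈ ((univ : Finset (Fin d)) \ S).powerset,
      mQ d s₀ T.card * ∑ L ∈ S.powerset, (-1:ℝ)^(s₀-L.card) * ν (T∪L)
      = ∑ L ∈ S.powerset, (-1:ℝ)^(s₀-L.card) * mQ d s₀ T.card * ν (T∪L) := by
    intro T _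
    rw [Finset.mul_sum]
    exact Finset.sum_congr rfl (fun L _ => by ring)
  rw [Finset.sum_congr rfl hcongr, ← Finset.sum_product']
  apply Finset.sum_nbij' (fun p => p.1 ∪ p.2) (fun A => (A \ S, A ∩ S))
  · intro p _
    exact Finset.mem_powerset.mpr (Finset.subset_univ _)
  · intro A _
    rw [Finset.mem_product]
    exact ⟨Finset.mem_powerset.mpr (Finset.sdiff_subset_sdiff (Finset.subset_univ _)
      (Finset.Subset.refl _)), Finset.mem_powerset.mpr Finset.inter_subset_right⟩
  · intro p hp
    rw [Finset.mem_product, Finset.mem_powerset, Finset.mem_powerset] at hp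
    obtain ⟨h1, h2⟩ := split_sets hp.1 hp.2
    simp only [h1, h2]
  · intro A _
    exact Finset.sdiff_union_inter A S
  · intro p hp
    rw [Finset.mem_product, Finset.mem_powerset, Finset.mem_powerset] at hp
    obtain ⟨h1, h2⟩ := split_sets hp.1 hp.2
    simp only [h1, h2]

lemma Ssum_eq (d s₀ : ℕ) (ν : Finset (Fin d) → ℝ) (A : Finset (Fin d)) :
    ∑ S ∈ powersetCard s₀ (univ : Finset (Fin d)),
      (-1:ℝ)^(s₀ - (A ∩ S).card) * mQ d s₀ ((A \ S).card) * ν A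
    = cQ d s₀ A.card * ν A := by
  have hmaps : ∀ S ∈ powersetCard s₀ (univ : Finset (Fin d)),
      (A ∩ S).card ∈ range (s₀ + 1) := by
    intro S hS
    rw [Finset.mem_range]
    have h1 : (A ∩ S).card ≤ S.card := Finset.card_le_card Finset.inter_subset_right
    have h2 : S.card = s₀ := (Finset.mem_powersetCard.mp hS).2
    omega
  rw [← Finset.sum_fiberwise_of_maps_to hmaps
    (fun S => (-1:ℝ)^(s₀ - (A ∩ S).card) * mQ d s₀ ((A \ S).card) * ν A), cQ,
    Finset.sum_mul]
  apply Finset.sum_congr rfl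
  intro l hl
  rw [Finset.mem_range] at hl
  have step : ∀ S ∈ (powersetCard s₀ (univ : Finset (Fin d))).filter
      (fun S => (A ∩ S).card = l),
      (-1:ℝ)^(s₀ - (A ∩ S).card) * mQ d s₀ ((A \ S).card) * ν A
        = (-1:ℝ)^(s₀ - l) * mQ d s₀ (A.card - l) * ν A := by
    intro S hS
    have hSl : (A ∩ S).card = l := (Finset.mem_filter.mp hS).2
    have hsd : (A \ S).card = A.card - l := by
      have := Finset.card_sdiff_add_card_inter A S
      omega
    rw [hSl, hsd]
  rw [Finset.sum_congr rfl step, Finset.sum_const, fiber_card d A s₀ l (by omega),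
    nsmul_eq_mul]
  push_cast
  ring

lemma rhs_eq (d s₀ : ℕ) (h2s : 2 * s₀ ≤ d) (ν : Finset (Fin d) → ℝ) :
    ∑ A ∈ (univ : Finset (Fin d)).powerset, tgtQ d s₀ A.card * ν A
    = ∑ T ∈ (univ : Finset (Fin d)).powerset.filter (fun T => T.card < s₀),
        (-1:ℝ)^T.card * (1/(s₀:ℝ)) * ((d - T.card).choose (s₀ - T.card - 1)) *
          ((-1:ℝ)^s₀ * ν T + ν (univ \ T)) := by
  classical
  have hcard : ∀ A : Finset (Fin d), A.card ≤ d := by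
    intro A
    have := Finset.card_le_univ A
    simpa using this
  rw [← Finset.sum_filter_add_sum_filter_not ((univ : Finset (Fin d)).powerset)
    (fun A => A.card < s₀)]
  have e1 : ∑ A ∈ (univ : Finset (Fin d)).powerset.filter (fun A => A.card < s₀),
      tgtQ d s₀ A.card * ν A
      = ∑ A ∈ (univ : Finset (Fin d)).powerset.filter (fun A => A.card < s₀),
        (-1:ℝ)^(A.card+s₀) * (1/(s₀:ℝ)) * ((d-A.card).choose (s₀-A.card-1)) * ν A := by
    apply Finset.sum_congr rfl
    intro A hA
    rw [tgtQ, if_pos (Finset.mem_filter.mp hA).2]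
  have e2 : ∑ A ∈ (univ : Finset (Fin d)).powerset.filter (fun A => ¬ A.card < s₀),
      tgtQ d s₀ A.card * ν A
      = ∑ T ∈ (univ : Finset (Fin d)).powerset.filter (fun T => T.card < s₀),
        (-1:ℝ)^T.card * (1/(s₀:ℝ)) * ((d - T.card).choose (s₀ - T.card - 1)) *
          ν (univ \ T) := by
    have e2a : ∑ A ∈ (univ : Finset (Fin d)).powerset.filter (fun A => ¬ A.card < s₀),
        tgtQ d s₀ A.card * ν A
        = ∑ A ∈ ((univ : Finset (Fin d)).powerset.filter (fun A => ¬ A.card < s₀)).filter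
            (fun A => d - A.card < s₀),
          (-1:ℝ)^(d-A.card) * (1/(s₀:ℝ)) * (A.card.choose (s₀-(d-A.card)-1)) * ν A := by
      conv_rhs => rw [Finset.sum_filter]
      apply Finset.sum_congr rfl
      intro A hA
      have hA2 : ¬ A.card < s₀ := (Finset.mem_filter.mp hA).2
      rw [tgtQ, if_neg hA2]
      by_cases hq : d - A.card < s₀
      · rw [if_pos hq, if_pos hq]
      · rw [if_neg hq, if_neg hq, zero_mul]
    rw [e2a]
    apply Finset.sum_nbij' (fun A => (univ : Finset (Fin d)) \ A)
      (fun T => (univ : Finset (Fin d)) \ T)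
    · intro A hA
      simp only [Finset.mem_filter, Finset.mem_powerset] at hA ⊢
      rw [Finset.card_univ_diff, Fintype.card_fin]
      exact ⟨Finset.subset_univ _, hA.2⟩
    · intro T hT
      simp only [Finset.mem_filter, Finset.mem_powerset] at hT ⊢
      rw [Finset.card_univ_diff, Fintype.card_fin]
      have := hcard T
      refine ⟨⟨Finset.subset_univ _, by omega⟩, by omega⟩
    · intro A _
      rw [Finset.sdiff_sdiff_self_left, Finset.univ_inter]
    · intro T _
      rw [Finset.sdiff_sdiff_self_left, Finset.univ_inter]
    · intro A hA
      simp only [Finset.mem_filter, Finset.mem_powerset] at hA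
      rw [Finset.card_univ_diff, Fintype.card_fin, Finset.sdiff_sdiff_self_left,
        Finset.univ_inter]
      have hAd := hcard A
      have ed : d - (d - A.card) = A.card := by omega
      rw [ed]
  rw [e1, e2, ← Finset.sum_add_distrib]
  apply Finset.sum_congr rfl
  intro T _
  rw [pow_add]
  ring

/-- Explicit formula for the sum of SII scores of top order `s₀` (Proposition in the
appendix of SHAP-IQ, with the sign `(−1)^{|T|}` corrected). -/
theorem sum_of_sii_scores
    (d s₀ : ℕ) (hs : 1 ≤ s₀) (h2s : 2 * s₀ ≤ d) (ν : Finset (Fin d) → ℝ) :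
    ∑ S ∈ Finset.powersetCard s₀ (Finset.univ : Finset (Fin d)),
      ∑ T ∈ ((Finset.univ : Finset (Fin d)) \ S).powerset,
        ((Nat.factorial (d - T.card - s₀) : ℝ) * (Nat.factorial T.card : ℝ) /
          (Nat.factorial (d - s₀ + 1) : ℝ)) *
          ∑ L ∈ S.powerset, (-1 : ℝ) ^ (S.card - L.card) * ν (T ∪ L) =
    ∑ T ∈ (Finset.univ : Finset (Fin d)).powerset.filter (fun T => T.card < s₀),
      (-1 : ℝ) ^ T.card * (1 / (s₀ : ℝ)) *
        (Nat.choose (d - T.card) (s₀ - T.card - 1) : ℝ) *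
        ((-1 : ℝ) ^ s₀ * ν T + ν (Finset.univ \ T)) := by
  have hcard : ∀ A : Finset (Fin d), A.card ≤ d := by
    intro A
    have := Finset.card_le_univ A
    simpa using this
  calc
    ∑ S ∈ Finset.powersetCard s₀ (Finset.univ : Finset (Fin d)),
      ∑ T ∈ ((Finset.univ : Finset (Fin d)) \ S).powerset,
        ((Nat.factorial (d - T.card - s₀) : ℝ) * (Nat.factorial T.card : ℝ) /
          (Nat.factorial (d - s₀ + 1) : ℝ)) *
          ∑ L ∈ S.powerset, (-1 : ℝ) ^ (S.card - L.card) * ν (T ∪ L)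
      = ∑ S ∈ Finset.powersetCard s₀ (Finset.univ : Finset (Fin d)),
          ∑ A ∈ (univ : Finset (Fin d)).powerset,
            (-1:ℝ)^(s₀ - (A ∩ S).card) * mQ d s₀ ((A \ S).card) * ν A := by
        apply Finset.sum_congr rfl
        intro S hS
        have hSc : S.card = s₀ := (Finset.mem_powersetCard.mp hS).2
        rw [← inner_eq d s₀ ν S]
        apply Finset.sum_congr rfl
        intro T _
        rw [hSc, mQ]
    _ = ∑ A ∈ (univ : Finset (Fin d)).powerset,
          ∑ S ∈ Finset.powersetCard s₀ (Finset.univ : Finset (Fin d)),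
            (-1:ℝ)^(s₀ - (A ∩ S).card) * mQ d s₀ ((A \ S).card) * ν A :=
        Finset.sum_comm
    _ = ∑ A ∈ (univ : Finset (Fin d)).powerset, cQ d s₀ A.card * ν A :=
        Finset.sum_congr rfl (fun A _ => Ssum_eq d s₀ ν A)
    _ = ∑ A ∈ (univ : Finset (Fin d)).powerset, tgtQ d s₀ A.card * ν A :=
        Finset.sum_congr rfl (fun A _ => by
          rw [cQ_eq_tgtQ d s₀ A.card hs h2s (hcard A)])
    _ = _ := rhs_eq d s₀ h2s ν
end

section
/- Ground-truth interaction values for unanimity games: let d ≥ 1, let m : ℕ → ℝ be any weight function, let Q, S ⊆ Fin d, and write q := |Q|, s := |S|, r := |S ∩ Q|. Then Σ_{T ⊆ Fin d, Q ⊆ T} (−1)^{s − |T ∩ S|} · m(|T| − |T ∩ S|) = Σ_{t=q}^{d} Σ_{k=0}^{min(t−q, s−r)} C(d − q − (s − r), t − q − k) · C(s − r, k) · (−1)^{s − (k + r)} · m(t − (k + r)); i.e. the full-powerset cardinal-interaction weight sum of the unanimity game ν_Q(T) = 𝟙(Q ⊆ T) admits the stated closed form ω(q, r). -/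
/-!
Every `T ⊇ Q` is uniquely `Q ∪ B ∪ C` with `B ⊆ S \ Q` and `C ⊆ (Q ∪ S)ᶜ`, and then
`|T ∩ S| = r + |B|` and `|T| - |T ∩ S| = (q - r) + |C|`. Summing over `B` and `C` by cardinality
gives a double sum over `k = |B|`, `j = |C|` weighted by `C(s - r, k) · C(d - q - (s - r), j)`;
regrouping it by `t = q + k + j` gives the closed form. The truncations `k ≤ min (t - q) (s - r)`
and `t ≤ d` are harmless because the binomial coefficients vanish beyond them.
-/

open Finset

namespace Finset

variable {α M : Type*} [DecidableEq α] [AddCommMonoid M]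

theorem sum_powerset_union_of_disjoint {X Y : Finset α} (h : Disjoint X Y)
    (f : Finset α → M) :
    ∑ A ∈ (X ∪ Y).powerset, f A = ∑ B ∈ X.powerset, ∑ C ∈ Y.powerset, f (B ∪ C) := by
  rw [← sum_product']
  symm
  refine sum_nbij' (fun p => p.1 ∪ p.2) (fun A => (A ∩ X, A ∩ Y)) ?_ ?_ ?_ ?_ fun _ _ => rfl
  · intro p hp
    simp only [mem_product, mem_powerset] at hp ⊢
    exact union_subset_union hp.1 hp.2
  · intro A _
    simp
  · rintro ⟨B, C⟩ hp
    simp only [mem_product, mem_powerset] at hp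
    have hBY : Disjoint B Y := h.mono_left hp.1
    have hCX : Disjoint C X := h.symm.mono_left hp.2
    simp only [union_inter_distrib_right, inter_eq_left.2 hp.1, inter_eq_left.2 hp.2,
      disjoint_iff_inter_eq_empty.1 hBY, disjoint_iff_inter_eq_empty.1 hCX, union_empty,
      empty_union]
  · intro A hA
    simp only [mem_powerset] at hA
    rw [← inter_union_distrib_left, inter_eq_left.2 hA]

theorem sum_filter_superset_eq_sum_powerset_compl [Fintype α] (Q : Finset α)
    (f : Finset α → M) :
    ∑ T ∈ univ.powerset.filter (Q ⊆ ·), f T = ∑ A ∈ Qᶜ.powerset, f (Q ∪ A) := by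
  rw [← Icc_eq_filter_powerset, Icc_eq_image_powerset (subset_univ Q), ← compl_eq_univ_sdiff,
    sum_image]
  intro A hA B hB hAB
  rw [mem_coe, mem_powerset, subset_compl_iff_disjoint_right] at hA hB
  rw [← union_sdiff_cancel_left hA.symm, ← union_sdiff_cancel_left hB.symm]
  exact congrArg (· \ Q) hAB

theorem sum_range_choose_smul_of_lt {a c : ℕ} (h : a < c) (f : ℕ → M) :
    ∑ k ∈ range c, a.choose k • f k = ∑ k ∈ range (a + 1), a.choose k • f k := by
  refine (sum_subset (range_subset_range.2 h) fun k _ hk => ?_).symm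
  rw [mem_range, not_lt] at hk
  rw [Nat.choose_eq_zero_of_lt hk, zero_smul]

theorem sum_range_min_choose_smul (a n : ℕ) (f : ℕ → M) :
    ∑ k ∈ range (min n a + 1), a.choose k • f k = ∑ k ∈ range (n + 1), a.choose k • f k := by
  rcases le_total n a with h | h
  · rw [min_eq_left h]
  · rw [min_eq_right h, sum_range_choose_smul_of_lt (Nat.lt_succ_of_le h)]

theorem sum_range_choose_smul_convolution (a b : ℕ) (f : ℕ → ℕ → M) :
    ∑ n ∈ range (a + b + 1), ∑ k ∈ range (n + 1), a.choose k • b.choose (n - k) • f k (n - k) =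
      ∑ k ∈ range (a + 1), ∑ j ∈ range (b + 1), a.choose k • b.choose j • f k j := by
  conv_lhs => simp only [range_eq_Ico]
  rw [← sum_Ico_Ico_comm]
  simp_rw [sum_Ico_eq_sum_range, Nat.sub_zero, zero_add, add_tsub_cancel_left, ← smul_sum]
  rw [sum_range_choose_smul_of_lt (by omega)]
  refine sum_congr rfl fun k hk => ?_
  rw [mem_range] at hk
  rw [sum_range_choose_smul_of_lt (by omega)]

theorem card_union_union_inter_sdiff_of_subset [Fintype α] {Q S B C : Finset α}
    (hB : B ⊆ S \ Q) (hC : C ⊆ Qᶜ \ S) :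
    #((Q ∪ (B ∪ C)) ∩ S) = #(S ∩ Q) + #B ∧ #((Q ∪ (B ∪ C)) \ S) = #(Q \ S) + #C := by
  have hinter : (Q ∪ (B ∪ C)) ∩ S = S ∩ Q ∪ B := by grind
  have hsdiff : (Q ∪ (B ∪ C)) \ S = Q \ S ∪ C := by grind
  rw [hinter, hsdiff, card_union_of_disjoint (by grind [disjoint_left]),
    card_union_of_disjoint (by grind [disjoint_left, mem_compl])]
  exact ⟨rfl, rfl⟩

theorem sum_superset_apply_card_inter_card_sdiff [Fintype α] (Q S : Finset α)
    (g : ℕ → ℕ → M) :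
    ∑ T ∈ univ.powerset.filter (Q ⊆ ·), g #(T ∩ S) #(T \ S) =
      ∑ k ∈ range (#(S \ Q) + 1), ∑ j ∈ range (#(Qᶜ \ S) + 1),
        (#(S \ Q)).choose k • (#(Qᶜ \ S)).choose j • g (#(S ∩ Q) + k) (#(Q \ S) + j) := by
  have hsplit : Qᶜ = S \ Q ∪ Qᶜ \ S := by grind [mem_compl]
  have hdisj : Disjoint (S \ Q) (Qᶜ \ S) := disjoint_sdiff_self_right.mono_left sdiff_subset
  rw [sum_filter_superset_eq_sum_powerset_compl, hsplit, sum_powerset_union_of_disjoint hdisj,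
    ← hsplit]
  calc _ = ∑ B ∈ (S \ Q).powerset, ∑ C ∈ (Qᶜ \ S).powerset, g (#(S ∩ Q) + #B) (#(Q \ S) + #C) :=
        sum_congr rfl fun B hB => sum_congr rfl fun C hC => by
          obtain ⟨hinter, hsdiff⟩ :=
            card_union_union_inter_sdiff_of_subset (mem_powerset.1 hB) (mem_powerset.1 hC)
          rw [hinter, hsdiff]
    _ = ∑ B ∈ (S \ Q).powerset, ∑ j ∈ range (#(Qᶜ \ S) + 1),
          (#(Qᶜ \ S)).choose j • g (#(S ∩ Q) + #B) (#(Q \ S) + j) :=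
        sum_congr rfl fun B _ => sum_powerset_apply_card fun j => g _ (_ + j)
    _ = _ := by
      rw [sum_powerset_apply_card fun k => ∑ j ∈ range (#(Qᶜ \ S) + 1),
        (#(Qᶜ \ S)).choose j • g (#(S ∩ Q) + k) (#(Q \ S) + j)]
      simp_rw [smul_sum]

end Finset

theorem unanimity_game_cii_closed_form_general
    (d : ℕ) (m : ℕ → ℝ) (Q S : Finset (Fin d)) :
    ∑ T ∈ (Finset.univ : Finset (Fin d)).powerset.filter (fun T => Q ⊆ T),
      (-1 : ℝ) ^ (S.card - (T ∩ S).card) * m (T.card - (T ∩ S).card) =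
    ∑ t ∈ Finset.Icc Q.card d,
      ∑ k ∈ Finset.range (min (t - Q.card) (S.card - (S ∩ Q).card) + 1),
        (Nat.choose (d - Q.card - (S.card - (S ∩ Q).card)) (t - Q.card - k) : ℝ) *
          (Nat.choose (S.card - (S ∩ Q).card) k : ℝ) *
          (-1 : ℝ) ^ (S.card - (k + (S ∩ Q).card)) * m (t - (k + (S ∩ Q).card)) := by
  set g : ℕ → ℕ → ℝ := fun i j => (-1) ^ (#S - i) * m j
  have hrq : #(S ∩ Q) ≤ #Q := card_le_card inter_subset_right
  have hSQ : #(S \ Q) = #S - #(S ∩ Q) := by grind [card_inter_add_card_sdiff]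
  have hQS : #(Q \ S) = #Q - #(S ∩ Q) := by grind [card_inter_add_card_sdiff, inter_comm]
  have hU : #(Qᶜ \ S) = d - #Q - #(S \ Q) := by
    rw [sdiff_eq_inter_compl, ← compl_union, card_compl, Fintype.card_fin]
    grind [card_union_add_card_inter, inter_comm]
  have hlen : d + 1 - #Q = #(S \ Q) + #(Qᶜ \ S) + 1 := by
    have hQd : #Q ≤ d := by simpa using card_le_univ Q
    have hSQd : #(S \ Q) ≤ d - #Q := by
      simpa [sdiff_eq_inter_compl, card_compl] using
        card_le_card (inter_subset_right (s₁ := S) (s₂ := Qᶜ))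
    omega
  calc _ = ∑ T ∈ univ.powerset.filter (Q ⊆ ·), g #(T ∩ S) #(T \ S) :=
        sum_congr rfl fun T _ => by rw [← card_inter_add_card_sdiff T S, add_tsub_cancel_left]
    _ = _ := sum_superset_apply_card_inter_card_sdiff Q S g
    _ = _ := (sum_range_choose_smul_convolution _ _ _).symm
    _ = _ := by
      rw [← hSQ, ← hU, ← Ico_add_one_right_eq_Icc, sum_Ico_eq_sum_range, hlen]
      refine sum_congr rfl fun n _ => ?_
      rw [← sum_range_min_choose_smul, add_tsub_cancel_left]
      refine sum_congr rfl fun k hk => ?_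
      have hkn : k ≤ n := by grind
      rw [show #Q + n - (k + #(S ∩ Q)) = #(Q \ S) + (n - k) by omega, add_comm k]
      simp only [g, nsmul_eq_mul]
      ring

/-- Ground-truth cardinal interaction values for unanimity games (Proposition in the
appendix of SHAP-IQ): the full-powerset weight sum of `ν_Q(T) = 𝟙(Q ⊆ T)` admits the
closed form `ω(q, r)`. -/
theorem unanimity_game_cii_closed_form
    (d : ℕ) (hd : 1 ≤ d) (m : ℕ → ℝ) (Q S : Finset (Fin d)) :
    ∑ T ∈ (Finset.univ : Finset (Fin d)).powerset.filter (fun T => Q ⊆ T),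
      (-1 : ℝ) ^ (S.card - (T ∩ S).card) * m (T.card - (T ∩ S).card) =
    ∑ t ∈ Finset.Icc Q.card d,
      ∑ k ∈ Finset.range (min (t - Q.card) (S.card - (S ∩ Q).card) + 1),
        (Nat.choose (d - Q.card - (S.card - (S ∩ Q).card)) (t - Q.card - k) : ℝ) *
          (Nat.choose (S.card - (S ∩ Q).card) k : ℝ) *
          (-1 : ℝ) ^ (S.card - (k + (S ∩ Q).card)) * m (t - (k + (S ∩ Q).card)) :=
  unanimity_game_cii_closed_form_general d m Q S
end

section
/- Unbiasedness of SHAP-IQ: let d ≥ 1, let ν : Finset (Fin d) → ℝ be a game, let m : ℕ → ℝ be weights, let S ⊆ Fin d be nonempty, and let k₀ be a natural number with 2k₀ ≤ d; set 𝒯 := {T ⊆ Fin d : k₀ ≤ |T| ≤ d − k₀}. Let p : Finset (Fin d) → ℝ satisfy p(T) > 0 for all T ∈ 𝒯 and Σ_{T ∈ 𝒯} p(T) = 1, and set c := Σ_{T ⊆ Fin d, T ∉ 𝒯} ν₀(T) · γ(|T|, |T ∩ S|). Then for every K ≥ 1, Σ_{τ : Fin K → Finset (Fin d), τ(k) ∈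 𝒯 for all k} (Π_{k} p(τ(k))) · ( c + (1/K) Σ_{k=1}^{K} ν₀(τ(k)) · γ(|τ(k)|, |τ(k) ∩ S|) / p(τ(k)) ) = I^m(S), i.e. the expected value of the SHAP-IQ estimator over K i.i.d. samples drawn from p equals the cardinal interaction index I^m(S) := Σ_{T ⊆ (Fin d) \ S} m(|T|) δ_S^ν(T). -/
/-- The sampling region `𝒯_{k₀} = {T ⊆ Fin d : k₀ ≤ |T| ≤ d − k₀}` of SHAP-IQ. -/
def shapIQRegion (d k₀ : ℕ) : Finset (Finset (Fin d)) :=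
  (Finset.univ : Finset (Fin d)).powerset.filter fun T => k₀ ≤ T.card ∧ T.card ≤ d - k₀

/-!
By linearity, the mean of the estimator over `K` i.i.d. samples is the mean over a single
sample, where the importance weight `1 / p` cancels `p`; the expectation is therefore
`c + ∑_{T ∈ 𝒯} ν₀(T) γ(|T|, |T ∩ S|) = ∑_T ν₀(T) γ(|T|, |T ∩ S|)`. Writing each `T` as
`(T \ S) ∪ (T ∩ S)` turns this into the defining double sum of `I^m(S)`, except that `ν₀`
appears instead of `ν`; the constant `ν(∅)` drops out because the alternating sum over the
powerset of a nonempty `S` vanishes.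
-/

open Finset Fintype

section Powerset

variable {α : Type*} [DecidableEq α]

lemma sum_powerset_neg_one_pow_card_sub_eq_zero {R : Type*} [Ring R] {S : Finset α}
    (hS : S.Nonempty) : ∑ L ∈ S.powerset, (-1 : R) ^ (#S - #L) = 0 := by
  have hcompl : ∑ L ∈ S.powerset, (-1 : R) ^ (#S - #L) = ∑ L ∈ S.powerset, (-1 : R) ^ #L := by
    refine sum_nbij' (S \ ·) (S \ ·) ?_ ?_ ?_ ?_ ?_ <;>
      simp_all [card_sdiff_of_subset]
  have hℤ := congrArg (Int.cast : ℤ → R) (sum_powerset_neg_one_pow_card_of_nonempty hS)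
  push_cast at hℤ
  rw [hcompl, hℤ]

lemma sum_powerset_neg_one_pow_card_sub_mul_sub_const {R : Type*} [Ring R] {S : Finset α}
    (hS : S.Nonempty) (f : Finset α → R) (c : R) :
    ∑ L ∈ S.powerset, (-1 : R) ^ (#S - #L) * (f L - c) =
      ∑ L ∈ S.powerset, (-1 : R) ^ (#S - #L) * f L := by
  simp only [mul_sub, sum_sub_distrib, ← sum_mul,
    sum_powerset_neg_one_pow_card_sub_eq_zero hS, zero_mul, sub_zero]

lemma sum_eq_sum_powerset_sdiff_sum_powerset [Fintype α] {M : Type*} [AddCommMonoid M]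
    (S : Finset α) (F : Finset α → Finset α → M) :
    ∑ W, F (W \ S) (W ∩ S) = ∑ T ∈ (univ \ S).powerset, ∑ L ∈ S.powerset, F T L := by
  rw [← sum_product']
  refine sum_nbij' (fun W => (W \ S, W ∩ S)) (fun x => x.1 ∪ x.2) ?_ ?_ ?_ ?_ ?_
  · intro W _
    simp only [mem_product, mem_powerset]
    exact ⟨sdiff_subset_sdiff (subset_univ W) le_rfl, inter_subset_right⟩
  · simp
  · intro W _
    simp [sdiff_union_inter]
  · rintro ⟨T, L⟩ hTL
    simp only [mem_product, mem_powerset] at hTL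
    obtain ⟨hT, hL⟩ := hTL
    have hTS : Disjoint T S := disjoint_of_subset_left hT sdiff_disjoint
    simp [union_sdiff_distrib, sdiff_eq_empty_iff_subset.mpr hL, hTS.sdiff_eq_left,
      union_inter_distrib_right, disjoint_iff_inter_eq_empty.mp hTS, inter_eq_left.mpr hL]
  · intros; rfl

end Powerset

section Expectation

variable {ι α 𝕜 : Type*} [Fintype ι] [DecidableEq ι]

lemma sum_piFinset_prod_eq_one [CommSemiring 𝕜] (s : Finset α) (p : α → 𝕜)
    (hp : ∑ a ∈ s, p a = 1) : ∑ τ ∈ piFinset fun _ : ι => s, ∏ i, p (τ i) = 1 := by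
  simp [sum_prod_piFinset s fun _ => p, hp]

lemma sum_piFinset_prod_mul_apply [CommSemiring 𝕜] (s : Finset α) (p : α → 𝕜)
    (hp : ∑ a ∈ s, p a = 1) (h : α → 𝕜) (k : ι) :
    ∑ τ ∈ piFinset fun _ : ι => s, (∏ i, p (τ i)) * h (τ k) = ∑ a ∈ s, p a * h a := by
  calc ∑ τ ∈ piFinset fun _ : ι => s, (∏ i, p (τ i)) * h (τ k)
      = ∑ τ ∈ piFinset fun _ : ι => s, ∏ i, p (τ i) * (if i = k then h (τ i) else 1) := by
        refine sum_congr rfl fun τ _ => ?_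
        rw [prod_mul_distrib, Fintype.prod_ite_eq']
    _ = ∏ i, ∑ a ∈ s, p a * (if i = k then h a else 1) :=
        sum_prod_piFinset s fun i a => p a * (if i = k then h a else 1)
    _ = ∑ a ∈ s, p a * h a := by
        rw [Fintype.prod_eq_single k fun i hik => by simp only [hik, if_false, mul_one, hp]]
        simp only [if_true]

lemma sum_piFinset_prod_mul_add_average [Field 𝕜] [CharZero 𝕜] [Nonempty ι] (s : Finset α)
    (p : α → 𝕜) (hp : ∑ a ∈ s, p a = 1) (h : α → 𝕜) (c : 𝕜) :
    ∑ τ ∈ piFinset fun _ : ι => s, (∏ i, p (τ i)) * (c + 1 / (card ι : 𝕜) * ∑ k, h (τ k)) =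
      c + ∑ a ∈ s, p a * h a := by
  have hι : (card ι : 𝕜) ≠ 0 := Nat.cast_ne_zero.mpr card_ne_zero
  have hweight : ∀ τ : ι → α, (∏ i, p (τ i)) * (1 / (card ι : 𝕜) * ∑ k, h (τ k)) =
      1 / (card ι : 𝕜) * ∑ k, (∏ i, p (τ i)) * h (τ k) := fun τ => by
    rw [mul_left_comm, mul_sum]
  simp only [mul_add, sum_add_distrib, ← sum_mul, sum_piFinset_prod_eq_one s p hp, one_mul,
    hweight]
  rw [← mul_sum, sum_comm]
  simp only [sum_piFinset_prod_mul_apply s p hp h, sum_const, card_univ, nsmul_eq_mul]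
  field_simp

end Expectation

section CardinalInteraction

variable {α R : Type*} [Fintype α] [DecidableEq α] [CommRing R]

def cardinalInteractionIndex (ν : Finset α → R) (m : ℕ → R) (S : Finset α) : R :=
  ∑ T ∈ (univ \ S).powerset, m #T * ∑ L ∈ S.powerset, (-1 : R) ^ (#S - #L) * ν (T ∪ L)

lemma cardinalInteractionIndex_eq_sum {S : Finset α} (hS : S.Nonempty) (ν : Finset α → R)
    (m : ℕ → R) :
    cardinalInteractionIndex ν m S =
      ∑ W, (ν W - ν ∅) * ((-1 : R) ^ (#S - #(W ∩ S)) * m (#W - #(W ∩ S))) := by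
  have hsplit : ∀ W : Finset α,
      (ν W - ν ∅) * ((-1 : R) ^ (#S - #(W ∩ S)) * m (#W - #(W ∩ S))) =
        m #(W \ S) * ((-1 : R) ^ (#S - #(W ∩ S)) * (ν ((W \ S) ∪ (W ∩ S)) - ν ∅)) := by
    intro W
    rw [sdiff_union_inter, card_sdiff, inter_comm S W]
    ring
  rw [sum_congr rfl fun W _ => hsplit W,
    sum_eq_sum_powerset_sdiff_sum_powerset S fun T L =>
      m #T * ((-1 : R) ^ (#S - #L) * (ν (T ∪ L) - ν ∅))]
  simp only [cardinalInteractionIndex, ← mul_sum,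
    sum_powerset_neg_one_pow_card_sub_mul_sub_const hS]

end CardinalInteraction

theorem shapiq_unbiased_general
    (d k₀ : ℕ)
    (ν : Finset (Fin d) → ℝ) (m : ℕ → ℝ) (S : Finset (Fin d)) (hS : S.Nonempty)
    (p : Finset (Fin d) → ℝ)
    (hpos : ∀ T ∈ shapIQRegion d k₀, 0 < p T)
    (hsum : ∑ T ∈ shapIQRegion d k₀, p T = 1)
    (K : ℕ) (hK : 1 ≤ K) :
    let ν₀ : Finset (Fin d) → ℝ := fun T => ν T - ν ∅
    let γ : ℕ → ℕ → ℝ := fun t k => (-1 : ℝ) ^ (S.card - k) * m (t - k)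
    let c : ℝ := ∑ T ∈ (Finset.univ : Finset (Fin d)).powerset.filter
        (fun T => T ∉ shapIQRegion d k₀), ν₀ T * γ T.card (T ∩ S).card
    ∑ τ ∈ (Finset.univ : Finset (Fin K → Finset (Fin d))).filter
        (fun τ => ∀ k, τ k ∈ shapIQRegion d k₀),
      (∏ k, p (τ k)) *
        (c + (1 / (K : ℝ)) *
          ∑ k, ν₀ (τ k) * γ (τ k).card ((τ k) ∩ S).card / p (τ k)) =
    ∑ T ∈ ((Finset.univ : Finset (Fin d)) \ S).powerset,
      m T.card * ∑ L ∈ S.powerset, (-1 : ℝ) ^ (S.card - L.card) * ν (T ∪ L) := by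
  intro ν₀ γ c
  set 𝒯 := shapIQRegion d k₀
  set g : Finset (Fin d) → ℝ := fun T => ν₀ T * γ #T #(T ∩ S)
  have : Nonempty (Fin K) := ⟨⟨0, hK⟩⟩
  have hpi : univ.filter (fun τ : Fin K → Finset (Fin d) => ∀ k, τ k ∈ 𝒯) =
      piFinset fun _ => 𝒯 := by
    ext; simp
  have hexpect := sum_piFinset_prod_mul_add_average (ι := Fin K) 𝒯 p hsum (fun T => g T / p T) c
  rw [Fintype.card_fin] at hexpect
  have himportance : ∑ T ∈ 𝒯, p T * (g T / p T) = ∑ T ∈ 𝒯, g T :=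
    sum_congr rfl fun T hT => mul_div_cancel₀ _ (hpos T hT).ne'
  have hcomplete : c + ∑ T ∈ 𝒯, g T = ∑ W, g W := by
    rw [← sum_compl_add_sum 𝒯, compl_eq_univ_sdiff, ← filter_notMem_eq_sdiff, ← powerset_univ]
  rw [hpi]
  refine hexpect.trans ?_
  rw [himportance, hcomplete]
  exact (cardinalInteractionIndex_eq_sum hS ν m).symm

/-- Unbiasedness of SHAP-IQ (part of Theorem 2 of SHAP-IQ): the expectation of the
SHAP-IQ estimator over `K` i.i.d. samples from `p` equals the cardinal interaction
index `I^m(S)`. -/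
theorem shapiq_unbiased
    (d k₀ : ℕ) (hd : 1 ≤ d) (hk : 2 * k₀ ≤ d)
    (ν : Finset (Fin d) → ℝ) (m : ℕ → ℝ) (S : Finset (Fin d)) (hS : S.Nonempty)
    (p : Finset (Fin d) → ℝ)
    (hpos : ∀ T ∈ shapIQRegion d k₀, 0 < p T)
    (hsum : ∑ T ∈ shapIQRegion d k₀, p T = 1)
    (K : ℕ) (hK : 1 ≤ K) :
    let ν₀ : Finset (Fin d) → ℝ := fun T => ν T - ν ∅
    let γ : ℕ → ℕ → ℝ := fun t k => (-1 : ℝ) ^ (S.card - k) * m (t - k)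
    let c : ℝ := ∑ T ∈ (Finset.univ : Finset (Fin d)).powerset.filter
        (fun T => T ∉ shapIQRegion d k₀), ν₀ T * γ T.card (T ∩ S).card
    ∑ τ ∈ (Finset.univ : Finset (Fin K → Finset (Fin d))).filter
        (fun τ => ∀ k, τ k ∈ shapIQRegion d k₀),
      (∏ k, p (τ k)) *
        (c + (1 / (K : ℝ)) *
          ∑ k, ν₀ (τ k) * γ (τ k).card ((τ k) ∩ S).card / p (τ k)) =
    ∑ T ∈ ((Finset.univ : Finset (Fin d)) \ S).powerset,
      m T.card * ∑ L ∈ S.powerset, (-1 : ℝ) ^ (S.card - L.card) * ν (T ∪ L) :=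
  shapiq_unbiased_general d k₀ ν m S hS p hpos hsum K hK
end

section
/- Chebyshev concentration bound for SHAP-IQ: in the setting of the unbiasedness statement (d ≥ 1, game ν, weights m, nonempty S ⊆ Fin d, 2k₀ ≤ d, 𝒯 := {T : k₀ ≤ |T| ≤ d − k₀}, p positive on 𝒯 with total mass 1, c := Σ_{T ∉ 𝒯} ν₀(T) γ(|T|, |T ∩ S|)), define for each tuple τ : Fin K → Finset (Fin d) with values in 𝒯 the estimate Î(τ) := c + (1/K) Σ_{k} ν₀(τ(k)) · γ(|τ(k)|, |τ(k) ∩ S|) / p(τ(k)), and set σ² := Σ_{T ∈ 𝒯} p(T) · ( ν₀(T) γ(|T|, |T ∩ S|)/p(T) − Σ_{T' ∈ 𝒯} ν₀(T') γ(|T'|, |T' ∩ S|) )². Then for every ε > 0 and K ≥ 1, Σ_{τ with values in 𝒯 and |Î(τ) − I^m(S)| > ε} Π_{k} p(τ(k)) ≤ σ² / (K · ε²). -/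
theorem pi_expect {ι β : Type*} [Fintype ι] [DecidableEq ι] [DecidableEq β] (t : Finset β)
    (p Y : β → ℝ) (hp : ∑ x ∈ t, p x = 1) (hY : ∑ x ∈ t, p x * Y x = 0) (j k : ι) :
    ∑ τ ∈ Fintype.piFinset (fun _ : ι => t), (∏ i, p (τ i)) * (Y (τ j) * Y (τ k))
      = if j = k then ∑ x ∈ t, p x * Y x ^ 2 else 0 := by
  by_cases hjk : j = k
  · subst hjk
    simp only [if_pos rfl]
    have key := Finset.prod_univ_sum (fun _ : ι => t)
      (fun i b => p b * if i = j then Y b ^ 2 else 1)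
    have h1 : ∀ τ ∈ Fintype.piFinset (fun _ : ι => t),
        (∏ i, (fun i b => p b * if i = j then Y b ^ 2 else 1) i (τ i)) =
        (∏ i, p (τ i)) * (Y (τ j) * Y (τ j)) := by
      intro τ _
      simp only
      rw [Finset.prod_mul_distrib, Finset.prod_ite_eq' Finset.univ j (fun i => Y (τ i) ^ 2)]
      simp [sq, mul_assoc]
    rw [← Finset.sum_congr rfl h1, ← key]
    have h2 : ∀ i : ι, (∑ x ∈ t, (p x * if i = j then Y x ^ 2 else 1))
        = if i = j then ∑ x ∈ t, p x * Y x ^ 2 else 1 := by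
      intro i; split_ifs <;> simp [hp]
    rw [Finset.prod_congr rfl (fun i _ => h2 i),
      Finset.prod_ite_eq' Finset.univ j (fun _ => ∑ x ∈ t, p x * Y x ^ 2)]
    simp
  · simp only [if_neg hjk]
    have key := Finset.prod_univ_sum (fun _ : ι => t)
      (fun i b => p b * ((if i = j then Y b else 1) * (if i = k then Y b else 1)))
    have h1 : ∀ τ ∈ Fintype.piFinset (fun _ : ι => t),
        (∏ i, (fun i b => p b * ((if i = j then Y b else 1) * (if i = k then Y b else 1))) i (τ i)) =
        (∏ i, p (τ i)) * (Y (τ j) * Y (τ k)) := by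
      intro τ _
      simp only
      rw [Finset.prod_mul_distrib, Finset.prod_mul_distrib,
        Finset.prod_ite_eq' Finset.univ j (fun i => Y (τ i)),
        Finset.prod_ite_eq' Finset.univ k (fun i => Y (τ i))]
      simp
    rw [← Finset.sum_congr rfl h1, ← key]
    have h2 : ∀ i : ι, (∑ x ∈ t, (p x * ((if i = j then Y x else 1) * (if i = k then Y x else 1))))
        = if i = j ∨ i = k then 0 else 1 := by
      intro i
      rcases eq_or_ne i j with rfl | hij
      · simp [hjk, hY]
      rcases eq_or_ne i k with rfl | hik
      · simp [hij, hY]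
      · simp [hij, hik, hp]
    rw [Finset.prod_congr rfl (fun i _ => h2 i)]
    apply Finset.prod_eq_zero (Finset.mem_univ j)
    simp

theorem pi_var {ι β : Type*} [Fintype ι] [DecidableEq ι] [DecidableEq β] (t : Finset β)
    (p Y : β → ℝ) (hp : ∑ x ∈ t, p x = 1) (hY : ∑ x ∈ t, p x * Y x = 0) :
    ∑ τ ∈ Fintype.piFinset (fun _ : ι => t), (∏ i, p (τ i)) * (∑ i, Y (τ i)) ^ 2
      = (Fintype.card ι : ℝ) * ∑ x ∈ t, p x * Y x ^ 2 := by
  have h1 : ∀ τ : ι → β, (∑ i, Y (τ i)) ^ 2 = ∑ j, ∑ k, Y (τ j) * Y (τ k) := by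
    intro τ; rw [sq, Finset.sum_mul_sum]
  calc ∑ τ ∈ Fintype.piFinset (fun _ : ι => t), (∏ i, p (τ i)) * (∑ i, Y (τ i)) ^ 2
      = ∑ j, ∑ k, ∑ τ ∈ Fintype.piFinset (fun _ : ι => t),
          (∏ i, p (τ i)) * (Y (τ j) * Y (τ k)) := by
        simp only [h1, Finset.mul_sum]
        rw [Finset.sum_comm]
        exact Finset.sum_congr rfl fun j _ => Finset.sum_comm
    _ = ∑ j : ι, ∑ k : ι, if j = k then ∑ x ∈ t, p x * Y x ^ 2 else 0 := by
        exact Finset.sum_congr rfl fun j _ => Finset.sum_congr rfl fun k _ =>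
          pi_expect t p Y hp hY j k
    _ = (Fintype.card ι : ℝ) * ∑ x ∈ t, p x * Y x ^ 2 := by
        rw [Finset.sum_congr rfl fun j (_ : j ∈ Finset.univ) =>
          Finset.sum_ite_eq Finset.univ j (fun _ => ∑ x ∈ t, p x * Y x ^ 2)]
        simp [Finset.card_univ, mul_comm]


theorem unbias (d : ℕ) (ν : Finset (Fin d) → ℝ) (m : ℕ → ℝ) (S : Finset (Fin d))
    (hS : S.Nonempty) :
    ∑ T ∈ ((Finset.univ : Finset (Fin d)) \ S).powerset,
      m T.card * ∑ L ∈ S.powerset, (-1 : ℝ) ^ (S.card - L.card) * ν (T ∪ L)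
    = ∑ W ∈ (Finset.univ : Finset (Fin d)).powerset,
      (ν W - ν ∅) * ((-1 : ℝ) ^ (S.card - (W ∩ S).card) * m (W.card - (W ∩ S).card)) := by
  have hsign : ∑ L ∈ S.powerset, (-1 : ℝ) ^ (S.card - L.card) = 0 := by
    have : ∀ L ∈ S.powerset, (-1 : ℝ) ^ (S.card - L.card)
        = (-1 : ℝ) ^ S.card * (-1 : ℝ) ^ L.card := by
      intro L hL
      have hc : L.card ≤ S.card := Finset.card_le_card (Finset.mem_powerset.mp hL)
      rw [pow_sub₀ (-1 : ℝ) (by norm_num) hc]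
      rw [← inv_pow, inv_neg, inv_one]
    rw [Finset.sum_congr rfl this, ← Finset.mul_sum]
    have hz := Finset.sum_powerset_neg_one_pow_card_of_nonempty hS
    have hz' : ∑ i ∈ S.powerset, (-1 : ℝ) ^ i.card = 0 := by
      have := congrArg (fun z : ℤ => (z : ℝ)) hz
      push_cast at this
      exact this
    rw [hz', mul_zero]
  -- replace ν by ν₀
  have step1 : ∀ T : Finset (Fin d),
      ∑ L ∈ S.powerset, (-1 : ℝ) ^ (S.card - L.card) * ν (T ∪ L)
      = ∑ L ∈ S.powerset, (-1 : ℝ) ^ (S.card - L.card) * (ν (T ∪ L) - ν ∅) := by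
    intro T
    rw [eq_comm]
    simp only [mul_sub, Finset.sum_sub_distrib, ← Finset.sum_mul, hsign]
    ring
  simp only [step1, Finset.mul_sum]
  rw [← Finset.sum_product']
  refine Finset.sum_nbij' (fun x => x.1 ∪ x.2) (fun W => (W \ S, W ∩ S)) ?_ ?_ ?_ ?_ ?_
  · intro a _; simp
  · intro W _
    simp only [Finset.mem_product, Finset.mem_powerset]
    exact ⟨fun x hx => by simp [(Finset.mem_sdiff.mp hx).2], Finset.inter_subset_right⟩
  · rintro ⟨T, L⟩ h
    simp only [Finset.mem_product, Finset.mem_powerset] at h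
    obtain ⟨hT, hL⟩ := h
    have hTS : Disjoint T S := by
      rw [Finset.disjoint_left]; intro x hx hxS
      exact (Finset.mem_sdiff.mp (hT hx)).2 hxS
    have h1 : (T ∪ L) \ S = T := by
      rw [Finset.union_sdiff_distrib, Finset.sdiff_eq_self_of_disjoint hTS,
        Finset.sdiff_eq_empty_iff_subset.mpr hL, Finset.union_empty]
    have h2 : (T ∪ L) ∩ S = L := by
      rw [Finset.union_inter_distrib_right, Finset.disjoint_iff_inter_eq_empty.mp hTS,
        Finset.inter_eq_left.mpr hL, Finset.empty_union]
    simp [h1, h2]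
  · intro W _
    simp [Finset.sdiff_union_inter]
  · rintro ⟨T, L⟩ h
    simp only [Finset.mem_product, Finset.mem_powerset] at h
    obtain ⟨hT, hL⟩ := h
    have hTS : Disjoint T L := by
      rw [Finset.disjoint_left]; intro x hx hxL
      exact (Finset.mem_sdiff.mp (hT hx)).2 (hL hxL)
    have h2 : (T ∪ L) ∩ S = L := by
      have hTS' : Disjoint T S := by
        rw [Finset.disjoint_left]; intro x hx hxS
        exact (Finset.mem_sdiff.mp (hT hx)).2 hxS
      rw [Finset.union_inter_distrib_right, Finset.disjoint_iff_inter_eq_empty.mp hTS',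
        Finset.inter_eq_left.mpr hL, Finset.empty_union]
    have hcard : (T ∪ L).card = T.card + L.card := Finset.card_union_of_disjoint hTS
    simp only [h2, hcard, Nat.add_sub_cancel]
    ring


open Classical in
/-- Chebyshev concentration bound for SHAP-IQ (part of Theorem 2 of SHAP-IQ):
`ℙ(|Î − I^m(S)| > ε) ≤ σ²/(K ε²)` under `K` i.i.d. samples from `p`. -/
theorem shapiq_chebyshev_bound
    (d k₀ : ℕ) (hd : 1 ≤ d) (hk : 2 * k₀ ≤ d)
    (ν : Finset (Fin d) → ℝ) (m : ℕ → ℝ) (S : Finset (Fin d)) (hS : S.Nonempty)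
    (p : Finset (Fin d) → ℝ)
    (hpos : ∀ T ∈ shapIQRegion d k₀, 0 < p T)
    (hsum : ∑ T ∈ shapIQRegion d k₀, p T = 1)
    (ε : ℝ) (hε : 0 < ε) (K : ℕ) (hK : 1 ≤ K) :
    let ν₀ : Finset (Fin d) → ℝ := fun T => ν T - ν ∅
    let γ : ℕ → ℕ → ℝ := fun t k => (-1 : ℝ) ^ (S.card - k) * m (t - k)
    let c : ℝ := ∑ T ∈ (Finset.univ : Finset (Fin d)).powerset.filter
        (fun T => T ∉ shapIQRegion d k₀), ν₀ T * γ T.card (T ∩ S).card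
    let Iex : ℝ := ∑ T ∈ ((Finset.univ : Finset (Fin d)) \ S).powerset,
      m T.card * ∑ L ∈ S.powerset, (-1 : ℝ) ^ (S.card - L.card) * ν (T ∪ L)
    let Ihat : (Fin K → Finset (Fin d)) → ℝ := fun τ =>
      c + (1 / (K : ℝ)) * ∑ k, ν₀ (τ k) * γ (τ k).card ((τ k) ∩ S).card / p (τ k)
    let σ2 : ℝ := ∑ T ∈ shapIQRegion d k₀,
      p T * (ν₀ T * γ T.card (T ∩ S).card / p T -
        ∑ T' ∈ shapIQRegion d k₀, ν₀ T' * γ T'.card (T' ∩ S).card) ^ 2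
    ∑ τ ∈ (Finset.univ : Finset (Fin K → Finset (Fin d))).filter
        (fun τ => (∀ k, τ k ∈ shapIQRegion d k₀) ∧ ε < |Ihat τ - Iex|),
      ∏ k, p (τ k) ≤ σ2 / ((K : ℝ) * ε ^ 2) := by
  intro ν₀ γ c Iex Ihat σ2
  set 𝒯 := shapIQRegion d k₀ with h𝒯
  set X : Finset (Fin d) → ℝ := fun T => ν₀ T * γ T.card (T ∩ S).card / p T with hX
  set μ : ℝ := ∑ T ∈ 𝒯, ν₀ T * γ T.card (T ∩ S).card with hμdef
  set Y : Finset (Fin d) → ℝ := fun T => X T - μ with hY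
  have hKpos : (0 : ℝ) < (K : ℝ) := by exact_mod_cast hK
  have hσ2 : σ2 = ∑ T ∈ 𝒯, p T * Y T ^ 2 := rfl
  -- expectation of X is μ
  have hμ : ∑ T ∈ 𝒯, p T * X T = μ := by
    rw [hμdef]
    refine Finset.sum_congr rfl fun T hT => ?_
    rw [hX]; field_simp [(hpos T hT).ne']
  -- mean zero
  have hYsum : ∑ T ∈ 𝒯, p T * Y T = 0 := by
    simp only [hY, mul_sub, Finset.sum_sub_distrib, hμ, ← Finset.sum_mul, hsum]
    ring
  -- unbiasedness : Iex = c + μ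
  have hIex : Iex = c + μ := by
    have hu := unbias d ν m S hS
    have hγ : ∀ W : Finset (Fin d),
        (ν W - ν ∅) * ((-1 : ℝ) ^ (S.card - (W ∩ S).card) * m (W.card - (W ∩ S).card))
        = ν₀ W * γ W.card (W ∩ S).card := fun W => rfl
    have hsplit := Finset.sum_filter_add_sum_filter_not
      (Finset.univ : Finset (Fin d)).powerset
      (fun T => k₀ ≤ T.card ∧ T.card ≤ d - k₀)
      (fun W => ν₀ W * γ W.card (W ∩ S).card)
    have hfeq : (Finset.univ : Finset (Fin d)).powerset.filter
        (fun T => ¬(k₀ ≤ T.card ∧ T.card ≤ d - k₀))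
        = (Finset.univ : Finset (Fin d)).powerset.filter (fun T => T ∉ 𝒯) := by
      refine Finset.filter_congr fun T hT => ?_
      simp [h𝒯, shapIQRegion, hT]
    show Iex = c + μ
    calc Iex = ∑ W ∈ (Finset.univ : Finset (Fin d)).powerset,
          ν₀ W * γ W.card (W ∩ S).card := by
          rw [show Iex = ∑ T ∈ ((Finset.univ : Finset (Fin d)) \ S).powerset,
            m T.card * ∑ L ∈ S.powerset, (-1 : ℝ) ^ (S.card - L.card) * ν (T ∪ L) from rfl, hu]
      _ = c + μ := by
          rw [← hsplit, hfeq]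
          rw [add_comm]
          rfl
  -- difference formula
  have hdiff : ∀ τ : Fin K → Finset (Fin d),
      Ihat τ - Iex = (1 / (K : ℝ)) * ∑ i, Y (τ i) := by
    intro τ
    have : Ihat τ = c + (1 / (K : ℝ)) * ∑ i, X (τ i) := rfl
    rw [this, hIex]
    simp only [hY, Finset.sum_sub_distrib, Finset.sum_const, Finset.card_univ,
      Fintype.card_fin, nsmul_eq_mul]
    field_simp
    ring
  -- the event set is contained in the product region
  set E := (Finset.univ : Finset (Fin K → Finset (Fin d))).filter
      (fun τ => (∀ k, τ k ∈ 𝒯) ∧ ε < |Ihat τ - Iex|) with hE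
  set PT := Fintype.piFinset (fun _ : Fin K => 𝒯) with hPT
  have hsub : E ⊆ PT := by
    intro τ hτ
    rw [hE, Finset.mem_filter] at hτ
    rw [hPT, Fintype.mem_piFinset]
    exact hτ.2.1
  have key := pi_var (ι := Fin K) 𝒯 p Y hsum hYsum
  calc ∑ τ ∈ E, ∏ k, p (τ k)
      ≤ ∑ τ ∈ E, (∏ k, p (τ k)) * ((∑ i, Y (τ i)) / ((K : ℝ) * ε)) ^ 2 := by
        refine Finset.sum_le_sum fun τ hτ => ?_
        rw [hE, Finset.mem_filter] at hτ
        obtain ⟨-, hτ1, hτ2⟩ := hτ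
        have hpn : (0 : ℝ) ≤ ∏ k, p (τ k) :=
          Finset.prod_nonneg fun k _ => (hpos _ (hτ1 k)).le
        have hKε : (0 : ℝ) < (K : ℝ) * ε := by positivity
        have h1 : 1 ≤ ((∑ i, Y (τ i)) / ((K : ℝ) * ε)) ^ 2 := by
          have habs : (K : ℝ) * ε < |∑ i, Y (τ i)| := by
            rw [hdiff τ, abs_mul, abs_of_pos (by positivity : (0:ℝ) < 1 / (K:ℝ))] at hτ2
            calc (K : ℝ) * ε < (K : ℝ) * (1 / (K : ℝ) * |∑ i, Y (τ i)|) := by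
                  exact (mul_lt_mul_iff_right₀ hKpos).mpr hτ2
              _ = |∑ i, Y (τ i)| := by field_simp
          have h2 : 1 ≤ |∑ i, Y (τ i)| / ((K : ℝ) * ε) :=
            (one_le_div hKε).mpr habs.le
          rw [← sq_abs, abs_div, abs_of_pos hKε]
          exact one_le_pow₀ h2
        nlinarith [mul_le_mul_of_nonneg_left h1 hpn]
    _ ≤ ∑ τ ∈ PT, (∏ k, p (τ k)) * ((∑ i, Y (τ i)) / ((K : ℝ) * ε)) ^ 2 := by
        refine Finset.sum_le_sum_of_subset_of_nonneg hsub fun τ hτ _ => ?_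
        rw [hPT, Fintype.mem_piFinset] at hτ
        have hpn : (0 : ℝ) ≤ ∏ k, p (τ k) :=
          Finset.prod_nonneg fun k _ => (hpos _ (hτ k)).le
        positivity
    _ = (1 / ((K : ℝ) * ε) ^ 2) * ∑ τ ∈ PT, (∏ k, p (τ k)) * (∑ i, Y (τ i)) ^ 2 := by
        rw [Finset.mul_sum]
        refine Finset.sum_congr rfl fun τ _ => ?_
        rw [div_pow]; ring
    _ = σ2 / ((K : ℝ) * ε ^ 2) := by
        rw [hPT, key, hσ2, Fintype.card_fin]
        field_simp
end

section
/- SHAP-IQ maintains efficiency for Shapley values: let d ≥ 2, let ν : Finset (Fin d) → ℝ be a game, let h := Σ_{k=1}^{d−1} 1/k, let K ≥ 1, and let T₁, …, T_K ⊆ Fin d be arbitrary subsets with 1 ≤ |T_k| ≤ d−1 for all k. Then the SHAP-IQ Shapley-value estimates sum to the efficiency value: Σ_{i ∈ Fin d} ( ν₀(Fin d)/d + (2h/K) · Σ_{k=1}^{K} ν₀(T_k) · (𝟙(i ∈ T_k) − |T_k|/d) ) = ν₀(Fin d). -/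
/-- SHAP-IQ maintains efficiency for Shapley values: for arbitrary samples
`T₁, …, T_K ∈ 𝒯₁`, the SHAP-IQ Shapley-value estimates sum to `ν₀(D)`. -/
theorem shapiq_shapley_efficiency
    (d : ℕ) (hd : 2 ≤ d) (ν : Finset (Fin d) → ℝ) (K : ℕ) (hK : 1 ≤ K)
    (T : Fin K → Finset (Fin d))
    (hT : ∀ k, 1 ≤ (T k).card ∧ (T k).card ≤ d - 1) :
    let ν₀ : Finset (Fin d) → ℝ := fun U => ν U - ν ∅
    let h : ℝ := ∑ j ∈ Finset.Icc 1 (d - 1), (1 : ℝ) / (j : ℝ)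
    ∑ i : Fin d, (ν₀ Finset.univ / (d : ℝ) + (2 * h / (K : ℝ)) *
        ∑ k, ν₀ (T k) * ((if i ∈ T k then (1 : ℝ) else 0) - ((T k).card : ℝ) / (d : ℝ))) =
      ν₀ Finset.univ := by
  intro ν₀ h
  have hd0 : (d : ℝ) ≠ 0 := by positivity
  rw [Finset.sum_add_distrib]
  have h1 : ∑ _i : Fin d, ν₀ Finset.univ / (d : ℝ) = ν₀ Finset.univ := by
    rw [Finset.sum_const, Finset.card_univ, Fintype.card_fin, nsmul_eq_mul]
    field_simp
  have h2 : ∑ i : Fin d, (2 * h / (K : ℝ)) *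
      ∑ k, ν₀ (T k) * ((if i ∈ T k then (1 : ℝ) else 0) - ((T k).card : ℝ) / (d : ℝ)) = 0 := by
    rw [← Finset.mul_sum, Finset.sum_comm]
    have : ∀ k : Fin K, ∑ i : Fin d,
        ν₀ (T k) * ((if i ∈ T k then (1 : ℝ) else 0) - ((T k).card : ℝ) / (d : ℝ)) = 0 := by
      intro k
      rw [← Finset.mul_sum]
      have : ∑ i : Fin d, ((if i ∈ T k then (1 : ℝ) else 0) - ((T k).card : ℝ) / (d : ℝ)) = 0 := by
        rw [Finset.sum_sub_distrib, Finset.sum_ite_mem, Finset.univ_inter,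
          Finset.sum_const, Finset.sum_const, Finset.card_univ, Fintype.card_fin]
        simp only [nsmul_eq_mul, mul_one]
        field_simp
        ring
      rw [this, mul_zero]
    rw [Finset.sum_congr rfl fun k _ => this k, Finset.sum_const, smul_zero, mul_zero]
  rw [h1, h2, add_zero]
end
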